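/- arXiv:2306.09144 — 4 statements merged into one kernel-verified Lean document; each statement's English description precedes it below -/
import Mathlib

section
/- Simulation of k-substitutions by (k+1)-substitutions: let Σ contain at least 2 symbols and let $ ∉ Σ. Given a unit-cost set of allowed k-substitutions D over Σ, define (k+1)-substitutions over Σ∪{$} by: for each allowed k-substitution a₁…a_k → b₁…b_k in D and each x ∈ Σ∪{$}, allow xa₁…a_k → xb₁…b_k and a₁…a_k x → b₁…b_k x, both with cost 1. Then for all v, w ∈ Σⁿ with n ≥ k, the minimum number of allowed k-substitutions transforming v into w equals the minimum number of allowed (k+1)-substitutions transforming $v$ into $w$ (padded with $ on both ends). -/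
/-- One application of an allowed substitution rule from `D`: some rule
`(a, b) ∈ D` rewrites the factor `a` into `b`. -/
def RuleStep {β : Type*} (D : Set (List β × List β)) (v w : List β) : Prop :=
  ∃ r ∈ D, ∃ p s : List β, v = p ++ r.1 ++ s ∧ w = p ++ r.2 ++ s

/-- A sequence of `m` steps of the relation `r` from `v` to `w`. -/
inductive StepChain {β : Type*} (r : β → β → Prop) : β → β → ℕ → Prop
  | refl (v : β) : StepChain r v v 0
  | tail {v u w : β} {m : ℕ} : StepChain r v u m → r u w → StepChain r v w (m + 1)

/-- Minimum number of allowed rule applications transforming `v` into `w`. -/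
noncomputable def ruleDist {β : Type*} (D : Set (List β × List β)) (v w : List β) : ℕ∞ :=
  sInf {c : ℕ∞ | ∃ m : ℕ, StepChain (RuleStep D) v w m ∧ c = (m : ℕ∞)}

/-- The `$`-padded version of a string, with `$` modelled by `none`. -/
def padS {α : Type*} (v : List α) : List (Option α) :=
  none :: (v.map some ++ [none])

/-- The lift of a set `D` of `k`-substitutions to `(k+1)`-substitutions over
`Σ ∪ {$}`: each allowed `k`-substitution `a₁…a_k → b₁…b_k` gives, for every
`x ∈ Σ ∪ {$}`, the `(k+1)`-substitutions `x a₁…a_k → x b₁…b_k` and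
`a₁…a_k x → b₁…b_k x`.  All other `(k+1)`-substitutions are forbidden. -/
def liftD {α : Type*} (D : Set (List α × List α)) :
    Set (List (Option α) × List (Option α)) :=
  {q | ∃ r ∈ D, ∃ x : Option α,
      q = (x :: r.1.map some, x :: r.2.map some) ∨
      q = (r.1.map some ++ [x], r.2.map some ++ [x])}

section Aux

variable {α : Type*}

lemma map_some_inj : Function.Injective (List.map (some : α → Option α)) :=
  List.map_injective_iff.mpr (Option.some_injective α)

lemma padS_inj : Function.Injective (padS : List α → List (Option α)) := by
  intro v w h
  unfold padS at h
  injection h with _ h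
  exact map_some_inj (List.append_inj' h (by simp)).1

lemma exists_map_some {l : List (Option α)} (h : (none : Option α) ∉ l) :
    ∃ t : List α, l = t.map some := by
  induction l with
  | nil => exact ⟨[], rfl⟩
  | cons x l ih =>
    simp only [List.mem_cons, not_or] at h
    obtain ⟨c, rfl⟩ := Option.ne_none_iff_exists'.mp (Ne.symm h.1)
    obtain ⟨t, rfl⟩ := ih h.2
    exact ⟨c :: t, rfl⟩

lemma step_fwd {D : Set (List α × List α)} {v w : List α}
    (h : RuleStep D v w) : RuleStep (liftD D) (padS v) (padS w) := by
  obtain ⟨r, hr, p, s, hv, hw⟩ := h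
  rcases List.eq_nil_or_concat p with rfl | ⟨q, c, rfl⟩
  · exact ⟨(none :: r.1.map some, none :: r.2.map some), ⟨r, hr, none, Or.inl rfl⟩,
      [], s.map some ++ [none], by simp [padS, hv, hw]⟩
  · exact ⟨(some c :: r.1.map some, some c :: r.2.map some), ⟨r, hr, some c, Or.inl rfl⟩,
      none :: q.map some, s.map some ++ [none], by simp [padS, hv, hw]⟩

lemma none_not_mem_map_some {l : List α} : (none : Option α) ∉ l.map some := by simp

lemma step_back {k : ℕ} (hk : 1 ≤ k) {D : Set (List α × List α)}
    (hD : ∀ r ∈ D, r.1.length = k ∧ r.2.length = k)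
    {v : List α} {W : List (Option α)}
    (h : RuleStep (liftD D) (padS v) W) :
    ∃ w : List α, W = padS w ∧ RuleStep D v w := by
  obtain ⟨r, hr, p, s, hV, hW⟩ := h
  obtain ⟨r₀, hr₀, x, hx | hx⟩ := hr
  · subst hx
    have ha : r₀.1 ≠ [] := by
      have := (hD r₀ hr₀).1
      intro h0; rw [h0] at this; simp at this; omega
    rcases p with _ | ⟨y, q⟩
    · simp only [padS, List.nil_append, List.cons_append] at hV
      injection hV with hx0 hV
      rcases List.eq_nil_or_concat s with rfl | ⟨t, z, rfl⟩
      · exfalso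
        rw [List.append_nil] at hV
        have : (none : Option α) ∈ r₀.1.map some := by rw [← hV]; simp
        simp at this
      · rw [List.concat_eq_append, ← List.append_assoc] at hV
        obtain ⟨hV1, hz⟩ := List.append_inj' hV (by simp)
        have hnt : (none : Option α) ∉ t := by
          intro hmem
          have : (none : Option α) ∈ v.map some := by rw [hV1]; simp [hmem]
          simp at this
        obtain ⟨t₀, rfl⟩ := exists_map_some hnt
        have hv' : v = r₀.1 ++ t₀ := map_some_inj (by simpa using hV1)
        injection hz with hz _
        refine ⟨r₀.2 ++ t₀, ?_, r₀, hr₀, [], t₀, by simpa using hv', by simp⟩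
        simp [hW, padS, ← hx0, ← hz]
    · simp only [padS, List.cons_append] at hV
      injection hV with hy hV
      rcases List.eq_nil_or_concat s with rfl | ⟨t, z, rfl⟩
      · exfalso
        obtain ⟨a', c, hA⟩ := List.eq_nil_or_concat r₀.1 |>.resolve_left ha
        rw [List.append_nil, hA] at hV
        have hV' : v.map some ++ [(none : Option α)] =
            (q ++ x :: a'.map some) ++ [some c] := by
          rw [hV]; simp
        obtain ⟨_, h2⟩ := List.append_inj' hV' (by simp)
        simp at h2
      · have hV' : v.map some ++ [(none : Option α)] =
            (q ++ x :: r₀.1.map some ++ t) ++ [z] := by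
          rw [hV]; simp
        obtain ⟨hV1, hz⟩ := List.append_inj' hV' (by simp)
        injection hz with hz _
        have hmem : ∀ u : Option α, u ∈ q ++ x :: r₀.1.map some ++ t →
            u ∈ v.map some := by
          intro u hu; rw [hV1]; exact hu
        have hnq : (none : Option α) ∉ q := fun hc => none_not_mem_map_some
          (hmem none (by simp [hc]))
        have hnx : x ≠ none := by
          intro hc
          exact none_not_mem_map_some (hmem none (by simp [hc]))
        have hnt : (none : Option α) ∉ t := fun hc => none_not_mem_map_some
          (hmem none (by simp [hc]))
        obtain ⟨c, rfl⟩ := Option.ne_none_iff_exists'.mp hnx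
        obtain ⟨q₀, rfl⟩ := exists_map_some hnq
        obtain ⟨t₀, rfl⟩ := exists_map_some hnt
        have hv' : v = q₀ ++ c :: r₀.1 ++ t₀ := map_some_inj (by simpa using hV1)
        refine ⟨q₀ ++ c :: r₀.2 ++ t₀, ?_, r₀, hr₀, q₀ ++ [c], t₀,
          by simpa using hv', by simp⟩
        simp [hW, padS, ← hy, ← hz]
  · subst hx
    have ha : r₀.1 ≠ [] := by
      have := (hD r₀ hr₀).1
      intro h0; rw [h0] at this; simp at this; omega
    have hb : r₀.2 ≠ [] := by
      have := (hD r₀ hr₀).2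
      intro h0; rw [h0] at this; simp at this; omega
    rcases p with _ | ⟨y, q⟩
    · exfalso
      obtain ⟨c, a', hA⟩ := List.exists_cons_of_ne_nil ha
      rw [hA] at hV
      simp only [padS, List.nil_append, List.map_cons, List.cons_append] at hV
      injection hV with h1 _
      simp at h1
    · simp only [padS, List.cons_append] at hV
      injection hV with hy hV
      rcases List.eq_nil_or_concat s with rfl | ⟨t, z, rfl⟩
      · have hV' : v.map some ++ [(none : Option α)] =
            (q ++ r₀.1.map some) ++ [x] := by
          rw [hV]; simp
        obtain ⟨hV1, hz⟩ := List.append_inj' hV' (by simp)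
        injection hz with hz _
        have hnq : (none : Option α) ∉ q := by
          intro hc
          have : (none : Option α) ∈ v.map some := by rw [hV1]; simp [hc]
          simp at this
        obtain ⟨q₀, rfl⟩ := exists_map_some hnq
        have hv' : v = q₀ ++ r₀.1 := map_some_inj (by simpa using hV1)
        refine ⟨q₀ ++ r₀.2, ?_, r₀, hr₀, q₀, [], by simpa using hv', by simp⟩
        simp [hW, padS, ← hy, ← hz]
      · have hV' : v.map some ++ [(none : Option α)] =
            (q ++ r₀.1.map some ++ x :: t) ++ [z] := by
          rw [hV]; simp
        obtain ⟨hV1, hz⟩ := List.append_inj' hV' (by simp)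
        injection hz with hz _
        have hmem : ∀ u : Option α, u ∈ q ++ r₀.1.map some ++ x :: t →
            u ∈ v.map some := by
          intro u hu; rw [hV1]; exact hu
        have hnq : (none : Option α) ∉ q := fun hc => none_not_mem_map_some
          (hmem none (by simp [hc]))
        have hnx : x ≠ none := by
          intro hc
          exact none_not_mem_map_some (hmem none (by simp [hc]))
        have hnt : (none : Option α) ∉ t := fun hc => none_not_mem_map_some
          (hmem none (by simp [hc]))
        obtain ⟨c, rfl⟩ := Option.ne_none_iff_exists'.mp hnx
        obtain ⟨q₀, rfl⟩ := exists_map_some hnq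
        obtain ⟨t₀, rfl⟩ := exists_map_some hnt
        have hv' : v = q₀ ++ r₀.1 ++ c :: t₀ := map_some_inj (by simpa using hV1)
        refine ⟨q₀ ++ r₀.2 ++ c :: t₀, ?_, r₀, hr₀, q₀, c :: t₀,
          by simpa using hv', by simp⟩
        simp [hW, padS, ← hy, ← hz]

lemma chain_fwd {D : Set (List α × List α)} {v w : List α} {m : ℕ}
    (h : StepChain (RuleStep D) v w m) :
    StepChain (RuleStep (liftD D)) (padS v) (padS w) m := by
  induction h with
  | refl => exact .refl _
  | tail hc hs ih => exact .tail ih (step_fwd hs)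

lemma chain_back {k : ℕ} (hk : 1 ≤ k) {D : Set (List α × List α)}
    (hD : ∀ r ∈ D, r.1.length = k ∧ r.2.length = k)
    {V W : List (Option α)} {m : ℕ}
    (h : StepChain (RuleStep (liftD D)) V W m) :
    ∀ v : List α, V = padS v → ∃ w : List α, W = padS w ∧ StepChain (RuleStep D) v w m := by
  induction h with
  | refl => exact fun v hv => ⟨v, hv, .refl v⟩
  | tail hc hs ih =>
    intro v hv
    obtain ⟨u, rfl, hcu⟩ := ih v hv
    obtain ⟨w, hw, hstep⟩ := step_back hk hD hs
    exact ⟨w, hw, .tail hcu hstep⟩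

end Aux

/-- Simulation of `k`-substitutions by `(k+1)`-substitutions: over an alphabet with
at least two symbols, for unit-cost allowed `k`-substitutions `D` and strings
`v, w ∈ Σⁿ` with `n ≥ k ≥ 1`, the minimum number of allowed `k`-substitutions
transforming `v` into `w` equals the minimum number of lifted `(k+1)`-substitutions
transforming `$v$` into `$w$`. -/
theorem ruleDist_lift {α : Type*} (hα : ∃ x y : α, x ≠ y) (k n : ℕ)
    (hk : 1 ≤ k) (hkn : k ≤ n) (D : Set (List α × List α))
    (hD : ∀ r ∈ D, r.1.length = k ∧ r.2.length = k)
    (v w : List α) (hv : v.length = n) (hw : w.length = n) :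
    ruleDist D v w = ruleDist (liftD D) (padS v) (padS w) := by
  unfold ruleDist
  congr 1
  ext c
  simp only [Set.mem_setOf_eq]
  constructor
  · rintro ⟨m, hc, rfl⟩
    exact ⟨m, chain_fwd hc, rfl⟩
  · rintro ⟨m, hc, rfl⟩
    obtain ⟨w', hw', hc'⟩ := chain_back hk hD hc v rfl
    have : w' = w := padS_inj hw'.symm
    exact ⟨m, this ▸ hc', rfl⟩
end

section
/- In the reduction from DECIS'-3-Hamming to DECIS-2-Hamming, the forward simulation holds: if a single allowed 3-substitution abc → def (cost 1) transforms v into w (equal-length strings over Σ), then the sliding-window encodings satisfy: E(v) can be transformed into E(w) by exactly three of the defined cost-1 2-substitutions, namely (ab)(bc) → S⁻_{(ab)(de)} S⁺_{(bc)(ef)}, then (xa)S⁻_{(ab)(de)} → (xd)(de), then S⁺_{(bc)(ef)}(cy) → (ef)(fy), where x and y are the symbols adjacent to the substituted block in $v$. -/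
/-- The augmented alphabet of the reduction from DECIS'-3-Hamming to
DECIS-2-Hamming: window pairs over `Σ ∪ {$}` (with `$` modelled by `none`),
plus the marker symbols `S⁻_{(ab)(de)}` and `S⁺_{(bc)(ef)}`. -/
inductive WSym (α : Type*) where
  | pair : Option α → Option α → WSym α
  | left : α × α → α × α → WSym α
  | right : α × α → α × α → WSym α

/-- The sliding-window encoding of `v`: the length-`(n+1)` string of overlapping
pairs of consecutive symbols of `$v$`. -/
def encS {α : Type*} (v : List α) : List (WSym α) :=
  ((padS v).zip (padS v).tail).map fun q => WSym.pair q.1 q.2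

/-- A `2`-substitution rewriting the factor `[x, y]` into `[x', y']`. -/
def Sub2 {β : Type*} (x y x' y' : β) (v w : List β) : Prop :=
  ∃ p s : List β, v = p ++ [x, y] ++ s ∧ w = p ++ [x', y'] ++ s

/-- One application of an allowed `3`-substitution from `D`. -/
def Step3 {α : Type*} (D : Set ((α × α × α) × (α × α × α))) (v w : List α) : Prop :=
  ∃ r ∈ D, ∃ p s : List α,
    v = p ++ [r.1.1, r.1.2.1, r.1.2.2] ++ s ∧ w = p ++ [r.2.1, r.2.2.1, r.2.2.2] ++ s

/-- One application of a cost-1 `2`-substitution of the reduction: for each allowed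
`3`-substitution `abc → def` in `D` we have `(ab)(bc) → S⁻_{(ab)(de)} S⁺_{(bc)(ef)}`,
`(xa) S⁻_{(ab)(de)} → (xd)(de)` for all `x ∈ Σ ∪ {$}`, and
`S⁺_{(bc)(ef)} (cy) → (ef)(fy)` for all `y ∈ Σ ∪ {$}`.  All other
`2`-substitutions are forbidden. -/
def Step2 {α : Type*} (D : Set ((α × α × α) × (α × α × α))) (v w : List (WSym α)) : Prop :=
  ∃ a b c d e f : α, ((a, b, c), (d, e, f)) ∈ D ∧
    (Sub2 (WSym.pair (some a) (some b)) (WSym.pair (some b) (some c))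
        (WSym.left (a, b) (d, e)) (WSym.right (b, c) (e, f)) v w ∨
     (∃ x : Option α, Sub2 (WSym.pair x (some a)) (WSym.left (a, b) (d, e))
        (WSym.pair x (some d)) (WSym.pair (some d) (some e)) v w) ∨
     (∃ y : Option α, Sub2 (WSym.right (b, c) (e, f)) (WSym.pair (some c) y)
        (WSym.pair (some e) (some f)) (WSym.pair (some f) y) v w))

def winMap {α : Type*} (u : List (Option α)) : List (WSym α) :=
  (u.zip u.tail).map fun q => WSym.pair q.1 q.2

lemma winMap_cons_cons {α : Type*} (u v : Option α) (t : List (Option α)) :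
    winMap (u :: v :: t) = WSym.pair u v :: winMap (v :: t) := rfl

lemma winMap_append {α : Type*} (l t : List (Option α)) (h : l ≠ []) :
    winMap (l ++ t) = winMap l ++ winMap (l.getLast h :: t) := by
  induction l with
  | nil => exact absurd rfl h
  | cons u l' ih =>
    cases l' with
    | nil => simp [winMap]
    | cons v l'' =>
      rw [List.cons_append, List.cons_append, winMap_cons_cons, winMap_cons_cons,
        ← List.cons_append, ih (by simp)]
      simp [List.getLast_cons]

/-- Forward simulation: if a single allowed `3`-substitution `abc → def` transforms
`v` into `w`, then `E(v)` is transformed into `E(w)` by exactly three of the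
cost-1 `2`-substitutions of the reduction, namely
`(ab)(bc) → S⁻_{(ab)(de)} S⁺_{(bc)(ef)}`, then `(xa)S⁻_{(ab)(de)} → (xd)(de)`,
then `S⁺_{(bc)(ef)}(cy) → (ef)(fy)`, where `x` and `y` are the symbols adjacent
to the substituted block in `$v$`. -/
theorem forward_simulation {α : Type*} (D : Set ((α × α × α) × (α × α × α)))
    (a b c d e f : α) (hr : ((a, b, c), (d, e, f)) ∈ D)
    (v w p s : List α) (hv : v = p ++ [a, b, c] ++ s) (hw : w = p ++ [d, e, f] ++ s) :
    ∃ (m₁ m₂ : List (WSym α)) (x y : Option α),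
      x = (padS v).getD p.length none ∧
      y = (padS v).getD (p.length + 4) none ∧
      Sub2 (WSym.pair (some a) (some b)) (WSym.pair (some b) (some c))
        (WSym.left (a, b) (d, e)) (WSym.right (b, c) (e, f)) (encS v) m₁ ∧
      Sub2 (WSym.pair x (some a)) (WSym.left (a, b) (d, e))
        (WSym.pair x (some d)) (WSym.pair (some d) (some e)) m₁ m₂ ∧
      Sub2 (WSym.right (b, c) (e, f)) (WSym.pair (some c) y)
        (WSym.pair (some e) (some f)) (WSym.pair (some f) y) m₂ (encS w) := by

  subst hv hw
  set L : List (Option α) := none :: p.map some with hLdef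
  have hL : L ≠ [] := by simp [hLdef]
  obtain ⟨y0, rest', hrest⟩ : ∃ y0 rest', s.map some ++ [(none : Option α)] = y0 :: rest' := by
    cases s <;> exact ⟨_, _, rfl⟩
  set x0 : Option α := L.getLast hL with hx0
  have hpadv : padS (p ++ [a, b, c] ++ s)
      = L ++ ([some a, some b, some c] ++ (y0 :: rest')) := by
    simp [padS, hLdef, hrest]
  have hpadw : padS (p ++ [d, e, f] ++ s)
      = L ++ ([some d, some e, some f] ++ (y0 :: rest')) := by
    simp [padS, hLdef, hrest]
  have hEv : encS (p ++ [a, b, c] ++ s)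
      = winMap L ++ (WSym.pair x0 (some a) :: WSym.pair (some a) (some b) ::
          WSym.pair (some b) (some c) :: WSym.pair (some c) y0 :: winMap (y0 :: rest')) := by
    show winMap (padS (p ++ [a, b, c] ++ s)) = _
    rw [hpadv, winMap_append _ _ hL, ← hx0]
    simp only [List.cons_append, List.nil_append, winMap_cons_cons]
  have hEw : encS (p ++ [d, e, f] ++ s)
      = winMap L ++ (WSym.pair x0 (some d) :: WSym.pair (some d) (some e) ::
          WSym.pair (some e) (some f) :: WSym.pair (some f) y0 :: winMap (y0 :: rest')) := by
    show winMap (padS (p ++ [d, e, f] ++ s)) = _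
    rw [hpadw, winMap_append _ _ hL, ← hx0]
    simp only [List.cons_append, List.nil_append, winMap_cons_cons]
  have hx : x0 = (padS (p ++ [a, b, c] ++ s)).getD p.length none := by
    rw [hpadv, List.getD_append _ _ _ _ (by simp [hLdef])]
    rw [hx0, List.getLast_eq_getElem, List.getD_eq_getElem _ _ (by simp [hLdef])]
    congr 1
    simp [hLdef]
  have hy : y0 = (padS (p ++ [a, b, c] ++ s)).getD (p.length + 4) none := by
    rw [hpadv, show L ++ ([some a, some b, some c] ++ (y0 :: rest'))
        = (L ++ [some a, some b, some c]) ++ (y0 :: rest') by simp,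
      List.getD_append_right _ _ _ _ (by simp [hLdef])]
    simp [hLdef]
  refine ⟨winMap L ++ (WSym.pair x0 (some a) :: WSym.left (a, b) (d, e) ::
      WSym.right (b, c) (e, f) :: WSym.pair (some c) y0 :: winMap (y0 :: rest')),
    winMap L ++ (WSym.pair x0 (some d) :: WSym.pair (some d) (some e) ::
      WSym.right (b, c) (e, f) :: WSym.pair (some c) y0 :: winMap (y0 :: rest')),
    x0, y0, hx, hy, ?_, ?_, ?_⟩
  · exact ⟨winMap L ++ [WSym.pair x0 (some a)],
      WSym.pair (some c) y0 :: winMap (y0 :: rest'), by rw [hEv]; simp, by simp⟩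
  · exact ⟨winMap L,
      WSym.right (b, c) (e, f) :: WSym.pair (some c) y0 :: winMap (y0 :: rest'),
      by simp, by simp⟩
  · exact ⟨winMap L ++ [WSym.pair x0 (some d), WSym.pair (some d) (some e)],
      winMap (y0 :: rest'), by simp, by rw [hEw]; simp⟩
end

section
/- Invariant lemma for the 2-Hamming reduction: any string over the augmented alphabet reachable from an encoding E(v) by the cost-1 2-substitutions of the reduction and containing no marker symbol S⁻ or S⁺ is itself the encoding E(v') of some string v' over Σ, and moreover v' is reachable from v by allowed 3-substitutions using a number of 3-substitutions equal to one third of the number of 2-substitutions applied. -/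
/-!
Read a configuration window by window from the left. Each application `abc → def` of a
3-substitution whose 2-substitutions have only partly been carried out is either *committed*,
when the decoded word already shows `def`, or not, when it still shows `abc`; the scanner
`Scan` guesses which, and emits the decoded `$`-padded word together with a balance `w`: the
2-substitutions spent on uncommitted applications count positively, those still owed by
committed ones negatively. So `n = 3 m + w` whenever the decoded word is reached from `v` by
`m` 3-substitutions. Every 2-substitution keeps the configuration decodable, after committing
at most two neighbouring applications, unless it creates the factor `S⁺ S⁻`, which can never
be removed again. A marker-free configuration decodes only as the encoding of the decoded
word, with balance `0`.
-/

namespace StepChain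

variable {β : Type*} {r : β → β → Prop} {a b c : β} {m k : ℕ}

theorem single (h : r a b) : StepChain r a b 1 := .tail (.refl a) h

theorem trans (h₁ : StepChain r a b m) (h₂ : StepChain r b c k) : StepChain r a c (m + k) := by
  induction h₂ with
  | refl => exact h₁
  | tail _ hs ih => exact ih.tail hs

theorem map {γ : Type*} {r' : γ → γ → Prop} (f : β → γ) (hf : ∀ a b, r a b → r' (f a) (f b))
    (h : StepChain r a b k) : StepChain r' (f a) (f b) k := by
  induction h with
  | refl => exact .refl _
  | tail _ hs ih => exact ih.tail (hf _ _ hs)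

end StepChain

namespace HammingReduction

variable {α : Type*} {D : Set ((α × α × α) × (α × α × α))}

theorem map_some_eq_append_triple {l : List α} {p q : List (Option α)} {a b c : α}
    (h : l.map some = p ++ [some a, some b, some c] ++ q) :
    ∃ P Q, l = P ++ [a, b, c] ++ Q ∧ p = P.map some ∧ q = Q.map some := by
  simp only [List.append_assoc, List.cons_append, List.nil_append, List.map_eq_append_iff,
    List.map_eq_cons_iff, Option.some.injEq] at h
  obtain ⟨P, _, rfl, rfl, _, _, rfl, rfl, _, _, rfl, rfl, _, Q, rfl, rfl, rfl⟩ := h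
  exact ⟨P, Q, by simp, rfl, rfl⟩

def PadStep3 (D : Set ((α × α × α) × (α × α × α))) (o o' : List (Option α)) : Prop :=
  ∃ r ∈ D, ∃ p s : List (Option α),
    o = p ++ [some r.1.1, some r.1.2.1, some r.1.2.2] ++ s ∧
      o' = p ++ [some r.2.1, some r.2.2.1, some r.2.2.2] ++ s

namespace PadStep3

variable {o o' : List (Option α)}

theorem of_eq {a b c d e f : α} (p s : List (Option α)) (hD : ((a, b, c), (d, e, f)) ∈ D)
    (ho : o = p ++ [some a, some b, some c] ++ s)
    (ho' : o' = p ++ [some d, some e, some f] ++ s) : PadStep3 D o o' :=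
  ⟨_, hD, p, s, ho, ho'⟩

theorem append_left (h : PadStep3 D o o') (p : List (Option α)) :
    PadStep3 D (p ++ o) (p ++ o') := by
  obtain ⟨r, hD, q, s, rfl, rfl⟩ := h
  exact ⟨r, hD, p ++ q, s, by simp, by simp⟩

theorem exists_step3 {l : List α} (h : PadStep3 D (none :: l.map some) o) :
    ∃ l', o = none :: l'.map some ∧ Step3 D l l' := by
  obtain ⟨r, hD, _ | ⟨z, p⟩, s, h, rfl⟩ := h
  · simp at h
  · simp only [List.cons_append, List.cons.injEq] at h
    obtain ⟨rfl, h⟩ := h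
    obtain ⟨P, Q, rfl, rfl, rfl⟩ := map_some_eq_append_triple h
    exact ⟨P ++ [r.2.1, r.2.2.1, r.2.2.2] ++ Q, by simp, r, hD, P, Q, rfl, rfl⟩

theorem exists_step3_chain {l : List α} {k : ℕ}
    (h : StepChain (PadStep3 D) (none :: l.map some) o k) :
    ∃ l', o = none :: l'.map some ∧ StepChain (Step3 D) l l' k := by
  induction h with
  | refl => exact ⟨l, rfl, .refl l⟩
  | tail _ hs ih =>
      obtain ⟨l₁, rfl, hc⟩ := ih
      obtain ⟨l₂, rfl, hs'⟩ := hs.exists_step3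
      exact ⟨l₂, rfl, hc.tail hs'⟩

end PadStep3

def CanPrecede : WSym α → WSym α → Prop
  | .right _ _, .left _ _ => False
  | _, _ => True

/-- No step can remove a factor `S⁺ S⁻`: resolving `S⁺` needs a window right after it, and
resolving `S⁻` one right before it. -/
def Stuck (u : List (WSym α)) : Prop := ¬ u.IsChain CanPrecede

@[simp]
theorem stuck_right_left_cons (x y x' y' : α × α) (q : List (WSym α)) :
    Stuck (.right x y :: .left x' y' :: q) := by
  simp [Stuck, CanPrecede]

@[simp]
theorem stuck_append_right_left_cons (p : List (WSym α)) (x y x' y' : α × α)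
    (q : List (WSym α)) : Stuck (p ++ .right x y :: .left x' y' :: q) := by
  simp [Stuck, CanPrecede]

namespace Stuck

variable {p q u u' : List (WSym α)}

theorem append_right (h : Stuck p) (q : List (WSym α)) : Stuck (p ++ q) :=
  fun hc => h hc.left_of_append

theorem append_left (h : Stuck q) (p : List (WSym α)) : Stuck (p ++ q) :=
  fun hc => h hc.right_of_append

theorem sub2 {x y x' y' : WSym α} (hu : Stuck u) (h : Sub2 x y x' y' u u')
    (hx : ∀ z, CanPrecede z x) (hy : ∀ z, CanPrecede y z) (hxy : CanPrecede x y) :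
    Stuck u' := by
  obtain ⟨p, s, rfl, rfl⟩ := h
  refine fun hc => hu ?_
  have hp : p.IsChain CanPrecede := hc.left_of_append.left_of_append
  have hs : s.IsChain CanPrecede := hc.right_of_append
  simp only [List.append_assoc, List.cons_append, List.nil_append,
    List.isChain_append_cons_cons]
  exact ⟨hp.append (.singleton x) fun z _ _ h => by cases Option.mem_some_iff.1 h; exact hx z,
    hxy, hs.cons fun _ _ => hy _⟩

theorem step2 (hu : Stuck u) (h : Step2 D u u') : Stuck u' := by
  obtain ⟨a, b, c, d, e, f, -, h | ⟨x, h⟩ | ⟨y, h⟩⟩ := h <;>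
    exact hu.sub2 h (by rintro (_ | _ | _) <;> trivial) (by rintro (_ | _ | _) <;> trivial)
      trivial

end Stuck

theorem not_stuck {u : List (WSym α)} (hu : ∀ z ∈ u, ∃ x y, z = WSym.pair x y) :
    ¬ Stuck u := by
  refine not_not_intro (List.isChain_iff_forall_rel_of_append_cons_cons.2 ?_)
  rintro z z' p q rfl
  obtain ⟨x, y, rfl⟩ := hu z (by simp)
  trivial

/-- State of the scanner between two windows. In `sync x` the windows agree and the decoded
letter at the current position is `x`. In `ahead c f` the next window starts with `c`, in
`behind d a` the last one ended with `d` (markers read as resolved), while the decoded letter is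
`f`, resp. `a`. `leftMarker a b d e` and `leftResolved a b d e` follow the marker
`S⁻_{(ab)(de)}`, resp. its resolution `(de)`, of an uncommitted application of `abc → def`. -/
inductive ScanState (α : Type*) where
  | sync : Option α → ScanState α
  | ahead : α → α → ScanState α
  | behind : α → α → ScanState α
  | leftMarker : α → α → α → α → ScanState α
  | leftResolved : α → α → α → α → ScanState α

open ScanState

/-- `ScanStep D s z o w s'`: from state `s` the window `z` is read, the decoded letter `o` at
its first position is emitted and `w` is added to the balance. -/
inductive ScanStep (D : Set ((α × α × α) × (α × α × α))) :
    ScanState α → WSym α → Option α → ℤ → ScanState α → Prop where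
  | pair (x y : Option α) : ScanStep D (sync x) (.pair x y) x 0 (sync y)
  | pairBehind (x : Option α) (d a : α) : ScanStep D (sync x) (.pair x (some d)) x 0 (behind d a)
  | aheadPair (c f : α) (y : Option α) :
      ScanStep D (ahead c f) (.pair (some c) y) (some f) 0 (sync y)
  | aheadPairBehind (c f d a : α) :
      ScanStep D (ahead c f) (.pair (some c) (some d)) (some f) 0 (behind d a)
  | left (a b d e : α) :
      ScanStep D (sync (some a)) (.left (a, b) (d, e)) (some a) 0 (leftMarker a b d e)
  | leftMarkerRight (a b c d e f : α) (h : ((a, b, c), (d, e, f)) ∈ D) :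
      ScanStep D (leftMarker a b d e) (.right (b, c) (e, f)) (some b) 1 (sync (some c))
  | leftMarkerPair (a b c d e f : α) (h : ((a, b, c), (d, e, f)) ∈ D) :
      ScanStep D (leftMarker a b d e) (.pair (some e) (some f)) (some b) 2 (ahead f c)
  | behindLeft (a b d e : α) :
      ScanStep D (behind a d) (.left (a, b) (d, e)) (some d) (-1) (sync (some e))
  | behindLeftBehind (a b d e c : α) :
      ScanStep D (behind a d) (.left (a, b) (d, e)) (some d) (-1) (behind e c)
  | behindPair (a b d e : α) :
      ScanStep D (behind d a) (.pair (some d) (some e)) (some a) 0 (leftResolved a b d e)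
  | leftResolvedRight (a b c d e f : α) (h : ((a, b, c), (d, e, f)) ∈ D) :
      ScanStep D (leftResolved a b d e) (.right (b, c) (e, f)) (some b) 2 (sync (some c))
  | right (b c e f : α) :
      ScanStep D (sync (some e)) (.right (b, c) (e, f)) (some e) (-1) (ahead c f)
  | aheadRight (b c e f g : α) :
      ScanStep D (ahead e g) (.right (b, c) (e, f)) (some g) (-1) (ahead c f)

inductive Scan (D : Set ((α × α × α) × (α × α × α))) :
    ScanState α → List (WSym α) → List (Option α) → ℤ → ScanState α → Prop where
  | nil (s : ScanState α) : Scan D s [] [] 0 s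
  | cons {s s' s'' : ScanState α} {z : WSym α} {u : List (WSym α)} {o : Option α}
      {out : List (Option α)} {w w' : ℤ} :
      ScanStep D s z o w s' → Scan D s' u out w' s'' → Scan D s (z :: u) (o :: out) (w + w') s''

theorem ScanStep.pair_retarget {s₀ s₁ : ScanState α} {x y o : Option α} {w : ℤ}
    (h : ScanStep D s₀ (.pair x y) o w s₁)
    (hs₁ : (∃ y', s₁ = sync y') ∨ ∃ d a, s₁ = behind d a) :
    w = 0 ∧ (∀ y', ScanStep D s₀ (.pair x y') o 0 (sync y')) ∧
      ∀ d a, ScanStep D s₀ (.pair x (some d)) o 0 (behind d a) := by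
  cases h with
  | pair | pairBehind => exact ⟨rfl, fun _ => .pair _ _, fun _ _ => .pairBehind _ _ _⟩
  | aheadPair | aheadPairBehind =>
      exact ⟨rfl, fun _ => .aheadPair _ _ _, fun _ _ => .aheadPairBehind _ _ _ _⟩
  | leftMarkerPair | behindPair => rcases hs₁ with ⟨_, ⟨⟩⟩ | ⟨_, _, ⟨⟩⟩

namespace Scan

variable {s s' s'' : ScanState α} {u u' : List (WSym α)} {out out' : List (Option α)}
  {w w' : ℤ}

theorem congr (h : Scan D s u out w s') (hout : out = out') (hw : w = w') :
    Scan D s u out' w' s' :=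
  hout ▸ hw ▸ h

theorem append (h : Scan D s u out w s') (h' : Scan D s' u' out' w' s'') :
    Scan D s (u ++ u') (out ++ out') (w + w') s'' := by
  induction h with
  | nil => simpa using h'
  | cons hz _ ih => simpa [add_assoc] using cons hz (ih h')

theorem of_append (h : Scan D s (u ++ u') out w s'') :
    ∃ s' out₁ out₂ w₁ w₂, Scan D s u out₁ w₁ s' ∧ Scan D s' u' out₂ w₂ s'' ∧
      out = out₁ ++ out₂ ∧ w = w₁ + w₂ := by
  induction u generalizing s out w with
  | nil => exact ⟨s, [], out, 0, w, nil s, h, rfl, by ring⟩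
  | cons z u ih =>
      obtain _ | ⟨hz, h⟩ := h
      obtain ⟨s', out₁, out₂, w₁, w₂, h₁, h₂, rfl, rfl⟩ := ih h
      exact ⟨s', _ :: out₁, out₂, _, w₂, cons hz h₁, h₂, rfl, by ring⟩

theorem snoc {z : WSym α} {o : Option α} (h : Scan D s u out w s')
    (hz : ScanStep D s' z o w' s'') : Scan D s (u ++ [z]) (out ++ [o]) (w + w') s'' := by
  simpa using h.append (cons hz (nil s''))

theorem cases_snoc (h : Scan D s u out w s'') :
    (u = [] ∧ s'' = s) ∨ ∃ u' z s' out' o w₁ w₂, u = u' ++ [z] ∧ out = out' ++ [o] ∧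
      w = w₁ + w₂ ∧ Scan D s u' out' w₁ s' ∧ ScanStep D s' z o w₂ s'' := by
  rcases List.eq_nil_or_concat u with rfl | ⟨u', z, rfl⟩
  · obtain _ | _ := h
    exact .inl ⟨rfl, rfl⟩
  · rw [List.concat_eq_append] at h ⊢
    obtain ⟨s', out', out₂, w₁, w₂, h₁, _ | ⟨hz, _ | _⟩, rfl, rfl⟩ := of_append h
    exact .inr ⟨u', z, s', out', _, w₁, _, rfl, rfl, by ring, h₁, hz⟩

end Scan

def windows : Option α → List (Option α) → List (WSym α)
  | _, [] => []
  | x, y :: l => .pair x y :: windows y l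

theorem encS_eq_windows (v : List α) : encS v = windows none (v.map some ++ [none]) := by
  suffices ∀ x l, windows x l = ((x :: l).zip l).map fun q => WSym.pair q.1 q.2 by
    rw [this]; rfl
  intro x l
  induction l generalizing x with
  | nil => rfl
  | cons y l ih => simp [windows, ih]

theorem scan_windows (x : Option α) (t : List (Option α)) :
    Scan D (sync x) (windows x (t ++ [none])) (x :: t) 0 (sync none) := by
  induction t generalizing x with
  | nil => exact .cons (.pair x none) (.nil _)
  | cons y t ih => exact .cons (.pair x y) (ih y)

namespace Scan

variable {s : ScanState α} {u p q : List (WSym α)} {out : List (Option α)} {w : ℤ}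
  {a b c d e f : α}

theorem eq_windows_of_forall_pair (h : Scan D s u out w (sync none))
    (hu : ∀ z ∈ u, ∃ x y, z = WSym.pair x y) :
    (∀ x, s = sync x → w = 0 ∧ ∃ t, x :: t = out ++ [none] ∧ u = windows x t) ∧
      (∀ d a, s ≠ behind d a) ∧ (∀ a b d e, s ≠ leftResolved a b d e) := by
  generalize hs : sync none = s'' at h
  induction h with
  | nil =>
      subst hs
      exact ⟨by rintro x ⟨⟩; exact ⟨rfl, [], rfl, rfl⟩, by rintro _ _ ⟨⟩, by rintro _ _ _ _ ⟨⟩⟩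
  | cons hz _ ih =>
      obtain ⟨ih_sync, ih_behind, ih_resolved⟩ :=
        ih (fun z hz => hu z (List.mem_cons_of_mem _ hz)) hs
      obtain ⟨x, y, rfl⟩ := hu _ List.mem_cons_self
      cases hz with
      | pair =>
          obtain ⟨rfl, t, ht, rfl⟩ := ih_sync y rfl
          exact ⟨by rintro _ ⟨⟩; exact ⟨rfl, y :: t, by simp [ht], rfl⟩,
            by rintro _ _ ⟨⟩, by rintro _ _ _ _ ⟨⟩⟩
      | pairBehind | aheadPairBehind => exact absurd rfl (ih_behind _ _)
      | behindPair => exact absurd rfl (ih_resolved _ _ _ _)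
      | aheadPair | leftMarkerPair =>
          exact ⟨by rintro _ ⟨⟩, by rintro _ _ ⟨⟩, by rintro _ _ _ _ ⟨⟩⟩

theorem eq_encS_of_forall_pair {v : List α}
    (h : Scan D (sync none) u (none :: v.map some) w (sync none))
    (hu : ∀ z ∈ u, ∃ x y, z = WSym.pair x y) : w = 0 ∧ u = encS v := by
  obtain ⟨rfl, t, ht, rfl⟩ := (h.eq_windows_of_forall_pair hu).1 none rfl
  rw [encS_eq_windows, show t = v.map some ++ [none] by simpa using ht]
  exact ⟨rfl, rfl⟩

theorem start_sync_of_start_ahead (h : Scan D (ahead c f) u out w (sync none)) :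
    ∃ t, out = some f :: t ∧ Scan D (sync (some c)) u (some c :: t) w (sync none) := by
  obtain _ | ⟨hz, h⟩ := h
  cases hz with
  | aheadPair _ _ y => exact ⟨_, rfl, cons (.pair _ y) h⟩
  | aheadPairBehind _ _ d a => exact ⟨_, rfl, cons (.pairBehind _ d a) h⟩
  | aheadRight b c' _ f' => exact ⟨_, rfl, cons (.right b c' c f') h⟩

theorem start_ahead_of_start_sync (h : Scan D (sync (some c)) u out w (sync none)) (f : α) :
    (∃ x y u', u = .left x y :: u') ∨
      ∃ t, out = some c :: t ∧ Scan D (ahead c f) u (some f :: t) w (sync none) := by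
  obtain _ | ⟨hz, h⟩ := h
  cases hz with
  | pair _ y => exact .inr ⟨_, rfl, cons (.aheadPair c f y) h⟩
  | pairBehind _ d a => exact .inr ⟨_, rfl, cons (.aheadPairBehind c f d a) h⟩
  | left => exact .inl ⟨_, _, _, rfl⟩
  | right b c' _ f' => exact .inr ⟨_, rfl, cons (.aheadRight b c' c f' f) h⟩

theorem end_behind_of_end_sync (h : Scan D (sync none) p out w (sync (some a))) (d : α) :
    (∀ x y, Stuck (p ++ [.left x y])) ∨ Scan D (sync none) p out w (behind a d) := by
  obtain ⟨-, ⟨⟩⟩ | ⟨p', z, s, out', o, w₁, w₂, rfl, rfl, rfl, hp, hz⟩ := h.cases_snoc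
  cases hz with
  | pair => exact .inr (hp.snoc (.pairBehind _ a d))
  | aheadPair c f => exact .inr (hp.snoc (.aheadPairBehind c f a d))
  | behindLeft a' b' d' => exact .inr (hp.snoc (.behindLeftBehind a' b' d' a d))
  | leftMarkerRight | leftResolvedRight => exact .inl fun _ _ => by simp

theorem commit_end_leftMarker (h : Scan D (sync none) p out w (leftMarker a b d e)) :
    Stuck p ∨ ∃ t, out = t ++ [some a] ∧
      Scan D (sync none) p (t ++ [some d]) (w - 1) (sync (some e)) := by
  obtain ⟨-, ⟨⟩⟩ | ⟨p', z, s, out', o, w₁, w₂, rfl, rfl, rfl, hp, hz⟩ := h.cases_snoc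
  cases hz with
  | left =>
      rcases hp.end_behind_of_end_sync d with hstuck | hp'
      · exact .inl (hstuck _ _)
      · exact .inr ⟨out', rfl, (hp'.snoc (.behindLeft a b d e)).congr rfl (by ring)⟩

theorem commit_end_ahead (h : Scan D (sync none) p out w (ahead a f)) :
    (∀ x y, Stuck (p ++ [.left x y])) ∨ ∃ a₁ b₁ d₁ e₁ t, ((a₁, b₁, f), (d₁, e₁, a)) ∈ D ∧
      out = t ++ [some a₁, some b₁] ∧
      Scan D (sync none) p (t ++ [some d₁, some e₁]) (w - 3) (sync (some a)) := by
  obtain ⟨-, ⟨⟩⟩ | ⟨p', z, s, out', o, w₁, w₂, rfl, rfl, rfl, hp, hz⟩ := h.cases_snoc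
  cases hz with
  | leftMarkerPair a₁ b₁ _ d₁ e₁ _ hD =>
      rcases hp.commit_end_leftMarker with hstuck | ⟨t, rfl, hp'⟩
      · exact .inl fun _ _ => (hstuck.append_right _).append_right _
      · exact .inr ⟨a₁, b₁, d₁, e₁, t, hD, by simp,
          (hp'.snoc (.pair _ _)).congr (by simp) (by ring)⟩
  | right | aheadRight => exact .inl fun _ _ => by simp

theorem end_sync_of_end_leftResolved (h : Scan D (sync none) p out w (leftResolved a b d e)) :
    ∃ t g, out = t ++ [g, some a] ∧ Scan D (sync none) p (t ++ [g, some d]) w (sync (some e)) := by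
  obtain ⟨-, ⟨⟩⟩ | ⟨p', z, s, out', o, w₁, w₂, rfl, rfl, rfl, hp, hz⟩ := h.cases_snoc
  cases hz with
  | behindPair =>
      obtain ⟨-, ⟨⟩⟩ | ⟨p'', z, s, t, g, w₃, w₄, rfl, rfl, rfl, hp, hz⟩ := hp.cases_snoc
      have hz' : ScanStep D s z g w₄ (sync (some d)) := by
        cases hz with
        | pairBehind => exact .pair _ _
        | aheadPairBehind => exact .aheadPair _ _ _
        | behindLeftBehind => exact .behindLeft _ _ _ _
      exact ⟨t, g, by simp, ((hp.snoc hz').snoc (.pair _ _)).congr (by simp) rfl⟩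

theorem commit_start_leftResolved (h : Scan D (leftResolved a b d e) u out w (sync none)) :
    Stuck u ∨ ∃ c f t, ((a, b, c), (d, e, f)) ∈ D ∧ out = some b :: some c :: t ∧
      Scan D (sync (some e)) u (some e :: some f :: t) (w - 3) (sync none) := by
  obtain _ | ⟨hz, h⟩ := h
  cases hz with
  | leftResolvedRight _ _ c _ _ f hD =>
      rcases h.start_ahead_of_start_sync f with ⟨x, y, u, rfl⟩ | ⟨t, rfl, h'⟩
      · exact .inl (by simp)
      · exact .inr ⟨c, f, t, hD, rfl, (cons (.right b c e f) h').congr rfl (by ring)⟩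

theorem commit_start_behind (h : Scan D (behind c a) u out w (sync none)) :
    (∀ x y, Stuck (.right x y :: u)) ∨ ∃ b₁ c₁ e₁ f₁ t, ((a, b₁, c₁), (c, e₁, f₁)) ∈ D ∧
      out = some a :: some b₁ :: some c₁ :: t ∧
      Scan D (sync (some c)) u (some c :: some e₁ :: some f₁ :: t) (w - 3) (sync none) := by
  obtain _ | ⟨hz, h⟩ := h
  cases hz with
  | behindLeft | behindLeftBehind => exact .inl fun _ _ => by simp
  | behindPair _ b₁ _ e₁ =>
      rcases h.commit_start_leftResolved with hstuck | ⟨c₁, f₁, t, hD, rfl, h'⟩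
      · exact .inl fun _ _ => (hstuck.append_left [_]).append_left [_]
      · exact .inr ⟨b₁, c₁, e₁, f₁, t, hD, rfl, (cons (.pair _ _) h').congr rfl (by ring)⟩

theorem commit_after_pair_pair
    (h : Scan D (sync (some a)) (.pair (some a) (some b) :: .pair (some b) (some c) :: q) out w
      (sync none)) :
    (∀ x y, Stuck (.right x y :: q)) ∨ ∃ out' w' k, Scan D (sync (some c)) q out' w' (sync none) ∧
      StepChain (PadStep3 D) out (some a :: some b :: out') k ∧ w = 3 * k + w' := by
  obtain _ | ⟨hz₁, _ | ⟨hz₂, h⟩⟩ := h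
  cases hz₁ with
  | pair =>
      cases hz₂ with
      | pair => exact .inr ⟨_, _, 0, h, .refl _, by ring⟩
      | pairBehind =>
          rcases h.commit_start_behind with hstuck | ⟨b₁, c₁, e₁, f₁, t, hD, rfl, h'⟩
          · exact .inl hstuck
          · exact .inr ⟨_, _, 1, h', .single (.of_eq [some a, some b] t hD rfl rfl), by ring⟩
  | pairBehind =>
      cases hz₂ with
      | behindPair =>
          rcases h.commit_start_leftResolved with hstuck | ⟨c₁, f₁, t, hD, rfl, h'⟩
          · exact .inl fun _ _ => hstuck.append_left [_]
          · exact .inr ⟨_, _, 1, h', .single (.of_eq [some a] t hD rfl rfl), by ring⟩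

theorem commit_before_pair_pair {s₀ : ScanState α} {outr : List (Option α)}
    {wr : ℤ} (hp : Scan D (sync none) p out w s₀)
    (hr : Scan D s₀ (.pair (some a) (some b) :: .pair (some b) (some c) :: q) outr wr
      (sync none)) :
    (∀ x y, Stuck (p ++ [.left x y])) ∨ ∃ out' outr' w' wr' k,
      Scan D (sync none) p out' w' (sync (some a)) ∧
      Scan D (sync (some a)) (.pair (some a) (some b) :: .pair (some b) (some c) :: q) outr' wr'
        (sync none) ∧
      StepChain (PadStep3 D) (out ++ outr) (out' ++ outr') k ∧ w + wr = 3 * k + (w' + wr') := by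
  obtain _ | ⟨hz₁, _ | ⟨hz₂, hs⟩⟩ := hr
  cases hz₁ with
  | pair => exact .inr ⟨_, _, _, _, 0, hp, .cons (.pair _ _) (.cons hz₂ hs), .refl _, by ring⟩
  | pairBehind =>
      exact .inr ⟨_, _, _, _, 0, hp, .cons (.pairBehind _ _ _) (.cons hz₂ hs), .refl _, by ring⟩
  | aheadPair =>
      rcases hp.commit_end_ahead with hstuck | ⟨a₁, b₁, d₁, e₁, t, hD, rfl, hp'⟩
      · exact .inl hstuck
      · exact .inr ⟨_, _, _, _, 1, hp', .cons (.pair _ _) (.cons hz₂ hs),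
          .single (.of_eq t _ hD (by simp; rfl) (by simp)), by ring⟩
  | aheadPairBehind =>
      rcases hp.commit_end_ahead with hstuck | ⟨a₁, b₁, d₁, e₁, t, hD, rfl, hp'⟩
      · exact .inl hstuck
      · exact .inr ⟨_, _, _, _, 1, hp', .cons (.pairBehind _ _ _) (.cons hz₂ hs),
          .single (.of_eq t _ hD (by simp; rfl) (by simp)), by ring⟩
  | leftMarkerPair a₁ b₁ c₁ d₁ _ _ hD =>
      rcases hp.commit_end_leftMarker with hstuck | ⟨t, rfl, hp'⟩
      · exact .inl fun _ _ => hstuck.append_right _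
      · cases hz₂ with
        | aheadPair =>
            exact .inr ⟨_, _, _, _, 1, hp', .cons (.pair _ _) (.cons (.pair _ _) hs),
              .single (.of_eq t _ hD (by simp; rfl) (by simp)), by ring⟩
        | aheadPairBehind =>
            exact .inr ⟨_, _, _, _, 1, hp', .cons (.pair _ _) (.cons (.pairBehind _ _ _) hs),
              .single (.of_eq t _ hD (by simp; rfl) (by simp)), by ring⟩
  | behindPair => cases hz₂

end Scan

def Redecodes (D : Set ((α × α × α) × (α × α × α))) (out : List (Option α)) (w : ℤ)
    (u : List (WSym α)) : Prop :=
  Stuck u ∨ ∃ out' w' k, Scan D (sync none) u out' w' (sync none) ∧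
    StepChain (PadStep3 D) out out' k ∧ w + 1 = 3 * k + w'

section Redecodes

variable {u p q : List (WSym α)} {out : List (Option α)} {w : ℤ} {a b c d e f : α}

theorem Redecodes.of_stepChain {out₀ : List (Option α)} {w₀ : ℤ} {k : ℕ}
    (hc : StepChain (PadStep3 D) out₀ out k) (hw : w₀ = 3 * k + w) (h : Redecodes D out w u) :
    Redecodes D out₀ w₀ u := by
  rcases h with hu | ⟨out', w', k', hs, hc', hw'⟩
  · exact .inl hu
  · exact .inr ⟨out', w', k + k', hs, hc.trans hc', by push_cast; linarith⟩

theorem redecodes_split (hD : ((a, b, c), (d, e, f)) ∈ D)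
    (h : Scan D (sync none) (p ++ .pair (some a) (some b) :: .pair (some b) (some c) :: q) out w
      (sync none)) :
    Redecodes D out w (p ++ .left (a, b) (d, e) :: .right (b, c) (e, f) :: q) := by
  obtain ⟨s₀, outp, outr, wp, wr, hp, hr, rfl, rfl⟩ := h.of_append
  rcases hp.commit_before_pair_pair hr with hstuck | ⟨outp', outr', wp', wr', k, hp', hr', hc, hw⟩
  · exact .inl (by simpa using (hstuck _ _).append_right (.right (b, c) (e, f) :: q))
  refine Redecodes.of_stepChain hc hw ?_
  rcases hr'.commit_after_pair_pair with hstuck | ⟨outs, ws, k', hs, hc', hw'⟩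
  · exact .inl (((hstuck _ _).append_left [_]).append_left p)
  exact .inr ⟨_, _, k',
    hp'.append (.cons (.left a b d e) (.cons (.leftMarkerRight a b c d e f hD) hs)),
    hc'.map (outp' ++ ·) fun _ _ h => h.append_left outp', by rw [hw']; ring⟩

theorem redecodes_resolveLeft {x : Option α}
    (h : Scan D (sync none) (p ++ .pair x (some a) :: .left (a, b) (d, e) :: q) out w
      (sync none)) :
    Redecodes D out w (p ++ .pair x (some d) :: .pair (some d) (some e) :: q) := by
  obtain ⟨s₀, outp, outr, wp, wr, hp, _ | ⟨hz₁, _ | ⟨hz₂, hs⟩⟩, rfl, rfl⟩ := h.of_append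
  cases hz₂ with
  | left =>
      obtain ⟨rfl, to_sync, to_behind⟩ := hz₁.pair_retarget (.inl ⟨_, rfl⟩)
      obtain _ | ⟨hz₃, hs⟩ := hs
      cases hz₃ with
      | leftMarkerRight _ _ c _ _ f hD =>
          exact .inr ⟨_, _, 0, hp.append (.cons (to_behind d a) (.cons (.behindPair a b d e)
            (.cons (.leftResolvedRight a b c d e f hD) hs))), .refl _, by ring⟩
      | leftMarkerPair _ _ c _ _ f hD =>
          obtain ⟨t, rfl, hs'⟩ := hs.start_sync_of_start_ahead
          exact .inr ⟨_, _, 1,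
            hp.append (.cons (to_sync _) (.cons (.pair _ _) (.cons (.pair _ _) hs'))),
            .single (.of_eq (outp ++ [_]) t hD (by simp; rfl) (by simp)), by ring⟩
  | behindLeft =>
      obtain ⟨rfl, to_sync, -⟩ := hz₁.pair_retarget (.inr ⟨_, _, rfl⟩)
      exact .inr ⟨_, _, 0, hp.append (.cons (to_sync _) (.cons (.pair _ _) hs)), .refl _, by ring⟩
  | behindLeftBehind =>
      obtain ⟨rfl, to_sync, -⟩ := hz₁.pair_retarget (.inr ⟨_, _, rfl⟩)
      exact .inr ⟨_, _, 0, hp.append (.cons (to_sync _) (.cons (.pairBehind _ _ _) hs)),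
        .refl _, by ring⟩

theorem redecodes_resolveRight {y : Option α}
    (h : Scan D (sync none) (p ++ .right (b, c) (e, f) :: .pair (some c) y :: q) out w
      (sync none)) :
    Redecodes D out w (p ++ .pair (some e) (some f) :: .pair (some f) y :: q) := by
  obtain ⟨s₀, outp, outr, wp, wr, hp, _ | ⟨hz₁, _ | ⟨hz₂, hs⟩⟩, rfl, rfl⟩ := h.of_append
  cases hz₁ with
  | leftMarkerRight a _ _ d _ _ hD =>
      cases hz₂ with
      | pair => exact .inr ⟨_, _, 0, hp.append (.cons (.leftMarkerPair a b c d e f hD)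
          (.cons (.aheadPair f c _) hs)), .refl _, by ring⟩
      | pairBehind => exact .inr ⟨_, _, 0, hp.append (.cons (.leftMarkerPair a b c d e f hD)
          (.cons (.aheadPairBehind f c _ _) hs)), .refl _, by ring⟩
  | leftResolvedRight a _ _ d _ _ hD =>
      obtain ⟨t, g, rfl, hp'⟩ := hp.end_sync_of_end_leftResolved
      cases hz₂ with
      | pair => exact .inr ⟨_, _, 1, hp'.append (.cons (.pair _ _) (.cons (.pair _ _) hs)),
          .single (.of_eq (t ++ [g]) _ hD (by simp; rfl) (by simp)), by ring⟩
      | pairBehind => exact .inr ⟨_, _, 1,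
          hp'.append (.cons (.pair _ _) (.cons (.pairBehind _ _ _) hs)),
          .single (.of_eq (t ++ [g]) _ hD (by simp; rfl) (by simp)), by ring⟩
  | right =>
      cases hz₂ with
      | aheadPair => exact .inr ⟨_, _, 0, hp.append (.cons (.pair _ _) (.cons (.pair _ _) hs)),
          .refl _, by ring⟩
      | aheadPairBehind => exact .inr ⟨_, _, 0,
          hp.append (.cons (.pair _ _) (.cons (.pairBehind _ _ _) hs)), .refl _, by ring⟩
  | aheadRight =>
      cases hz₂ with
      | aheadPair => exact .inr ⟨_, _, 0,
          hp.append (.cons (.aheadPair _ _ _) (.cons (.pair _ _) hs)), .refl _, by ring⟩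
      | aheadPairBehind => exact .inr ⟨_, _, 0,
          hp.append (.cons (.aheadPair _ _ _) (.cons (.pairBehind _ _ _) hs)), .refl _, by ring⟩

theorem redecodes_of_step2 {u' : List (WSym α)} (h : Scan D (sync none) u out w (sync none))
    (hs : Step2 D u u') : Redecodes D out w u' := by
  obtain ⟨a, b, c, d, e, f, hD, ⟨p, q, rfl, rfl⟩ | ⟨x, p, q, rfl, rfl⟩ | ⟨y, p, q, rfl, rfl⟩⟩ := hs
  all_goals simp only [List.append_assoc, List.cons_append, List.nil_append] at h ⊢
  · exact redecodes_split hD h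
  · exact redecodes_resolveLeft h
  · exact redecodes_resolveRight h

end Redecodes

theorem stuck_or_decodes {v : List α} {u : List (WSym α)} {n : ℕ}
    (h : StepChain (Step2 D) (encS v) u n) :
    Stuck u ∨ ∃ v' w m, Scan D (sync none) u (none :: v'.map some) w (sync none) ∧
      StepChain (Step3 D) v v' m ∧ (n : ℤ) = 3 * m + w := by
  induction h with
  | refl => exact .inr ⟨v, 0, 0, by rw [encS_eq_windows]; exact scan_windows _ _, .refl v, rfl⟩
  | tail _ hs ih =>
      rcases ih with hu | ⟨v', w, m, hscan, hc, hn⟩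
      · exact .inl (hu.step2 hs)
      rcases redecodes_of_step2 hscan hs with hu | ⟨out', w', k, hscan', hc', hw⟩
      · exact .inl hu
      obtain ⟨v'', rfl, hc''⟩ := PadStep3.exists_step3_chain hc'
      exact .inr ⟨v'', w', m + k, hscan', hc.trans hc'', by push_cast; linarith⟩

end HammingReduction

/-- Invariant lemma: any string over the augmented alphabet reachable from an
encoding `E(v)` by the cost-1 `2`-substitutions of the reduction and containing no
marker symbol is itself the encoding `E(v')` of some `v'`, and `v'` is reachable
from `v` by allowed `3`-substitutions whose number is one third of the number of
`2`-substitutions applied. -/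
theorem invariant_lemma {α : Type*} (D : Set ((α × α × α) × (α × α × α)))
    (v : List α) (u : List (WSym α)) (n : ℕ)
    (hchain : StepChain (Step2 D) (encS v) u n)
    (hnomarker : ∀ z ∈ u, ∃ x y : Option α, z = WSym.pair x y) :
    ∃ (v' : List α) (m : ℕ), u = encS v' ∧ n = 3 * m ∧ StepChain (Step3 D) v v' m := by
  rcases HammingReduction.stuck_or_decodes hchain with hu | ⟨v', w, m, hscan, hc, hn⟩
  · exact absurd hu (HammingReduction.not_stuck hnomarker)
  obtain ⟨rfl, rfl⟩ := hscan.eq_encS_of_forall_pair hnomarker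
  exact ⟨v', m, rfl, by omega, hc⟩
end

section
/- Parity/counting obstruction for the 2-Edit reduction: in the reduction's cost-1-or-simulation operation set, any sequence of allowed finite-cost operations transforming a string without fresh symbols (S¹,S²,S³,*) into another string without fresh symbols must, for each inserted marker S¹_{(abc)(def)}, also contain the corresponding three 2-substitutions and the deletion of *; hence its total cost is a sum of terms of the form 5·γ(t) over simulated original operations t. -/
/-- The alphabet augmented with the fresh symbols `S¹_{(abc)(def)}`,
`S²_{(abc)(def)}`, `S³_{(abc)(def)}` and `*` of the DECIS'-3-Edit to
DECIS-2-Edit reduction. -/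
inductive ESym (α : Type*) where
  | base : α → ESym α
  | m1 : (α × α × α) → (α × α × α) → ESym α
  | m2 : (α × α × α) → (α × α × α) → ESym α
  | m3 : (α × α × α) → (α × α × α) → ESym α
  | star : ESym α

/-- Insertion of the symbol `x` at some position. -/
def InsOp {β : Type*} (x : β) (v w : List β) : Prop :=
  ∃ p s : List β, v = p ++ s ∧ w = p ++ [x] ++ s

/-- Deletion of the symbol `x` at some position. -/
def DelOp {β : Type*} (x : β) (v w : List β) : Prop :=
  ∃ p s : List β, v = p ++ [x] ++ s ∧ w = p ++ s

/-- Substitution of the symbol `x` by `y` at some position. -/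
def Sub1 {β : Type*} (x y : β) (v w : List β) : Prop :=
  ∃ p s : List β, v = p ++ [x] ++ s ∧ w = p ++ [y] ++ s

/-- A finite sequence of weighted steps with its total cost. -/
inductive CostChain {β : Type*} (step : β → β → ℕ → Prop) : β → β → ℕ → Prop
  | refl (v : β) : CostChain step v v 0
  | tail {v u w : β} {n c : ℕ} :
      CostChain step v u n → step u w c → CostChain step v w (n + c)

/-- One original operation of a DECIS'-3-Edit instance, with its cost: allowed
insertions, deletions and substitutions of cost `1`, and allowed `3`-substitutions
`r ∈ D3` of cost `γ3 r`. -/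
def OrigStep {α : Type*} (I1 Dl : Set α) (Sb : Set (α × α))
    (D3 : Set ((α × α × α) × (α × α × α))) (γ3 : ((α × α × α) × (α × α × α)) → ℕ)
    (v w : List α) (c : ℕ) : Prop :=
  (∃ a ∈ I1, InsOp a v w ∧ c = 1) ∨
  (∃ a ∈ Dl, DelOp a v w ∧ c = 1) ∨
  (∃ r ∈ Sb, Sub1 r.1 r.2 v w ∧ c = 1) ∨
  (∃ r ∈ D3, (∃ p s : List α, v = p ++ [r.1.1, r.1.2.1, r.1.2.2] ++ s ∧
      w = p ++ [r.2.1, r.2.2.1, r.2.2.2] ++ s) ∧ c = γ3 r)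

/-- One finite-cost operation of the reduced DECIS-2-Edit instance, with its cost:
original insertions/deletions/substitutions become cost-5 operations, and each
original `3`-substitution `abc → def` of cost `k` is simulated by the gadget
`ε → S¹` (cost `5k - 4`), `aS¹ → dS²`, `S²b → eS³`, `S³c → f*`, `* → ε`
(each of cost `1`).  All other operations are prohibited. -/
def RedStep {α : Type*} (I1 Dl : Set α) (Sb : Set (α × α))
    (D3 : Set ((α × α × α) × (α × α × α))) (γ3 : ((α × α × α) × (α × α × α)) → ℕ)
    (v w : List (ESym α)) (c : ℕ) : Prop :=
  (∃ a ∈ I1, InsOp (ESym.base a) v w ∧ c = 5) ∨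
  (∃ a ∈ Dl, DelOp (ESym.base a) v w ∧ c = 5) ∨
  (∃ r ∈ Sb, Sub1 (ESym.base r.1) (ESym.base r.2) v w ∧ c = 5) ∨
  (∃ r ∈ D3, InsOp (ESym.m1 r.1 r.2) v w ∧ c = 5 * γ3 r - 4) ∨
  (∃ r ∈ D3, Sub2 (ESym.base r.1.1) (ESym.m1 r.1 r.2)
      (ESym.base r.2.1) (ESym.m2 r.1 r.2) v w ∧ c = 1) ∨
  (∃ r ∈ D3, Sub2 (ESym.m2 r.1 r.2) (ESym.base r.1.2.1)
      (ESym.base r.2.2.1) (ESym.m3 r.1 r.2) v w ∧ c = 1) ∨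
  (∃ r ∈ D3, Sub2 (ESym.m3 r.1 r.2) (ESym.base r.1.2.2)
      (ESym.base r.2.2.2) ESym.star v w ∧ c = 1) ∨
  (DelOp (ESym.star : ESym α) v w ∧ c = 1)

namespace Red

variable {α : Type*}

/-- Block kinds for the pending-structure relation. -/
inductive Mk (α : Type*) where
  | m2 (a b : α × α × α)
  | m3 (a b : α × α × α)
  | star
  | ghost

def Mk.mark : Mk α → List (ESym α)
  | .m2 a b => [ESym.m2 a b]
  | .m3 a b => [ESym.m3 a b]
  | .star => [ESym.star]
  | .ghost => []

def Mk.need : Mk α → List α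
  | .m2 a _ => [a.2.1, a.2.2]
  | .m3 a _ => [a.2.2]
  | _ => []

def Mk.give : Mk α → List α
  | .m2 _ b => [b.2.1, b.2.2]
  | .m3 _ b => [b.2.2]
  | _ => []

def Mk.off : Mk α → ℤ
  | .m2 _ _ => 3
  | .m3 _ _ => 2
  | .star => 1
  | .ghost => 0

variable (I1 Dl : Set α) (Sb : Set (α × α))
    (D3 : Set ((α × α × α) × (α × α × α))) (γ3 : ((α × α × α) × (α × α × α)) → ℕ)

local notation "O" => OrigStep I1 Dl Sb D3 γ3

section chains

variable {I1 Dl Sb D3 γ3}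

theorem chain_single {v w : List α} {c : ℕ} (h : O v w c) : CostChain O v w c := by
  have := CostChain.tail (CostChain.refl v) h
  simpa using this

theorem chain_trans {v w z : List α} {c d : ℕ} (h : CostChain O v w c)
    (h' : CostChain O w z d) : CostChain O v z (c + d) := by
  induction h' with
  | refl => simpa using h
  | tail h₁ h₂ ih =>
      have := CostChain.tail ih h₂
      simpa [Nat.add_assoc] using this

theorem orig_embed {v w : List α} {c : ℕ} (L R : List α) (h : O v w c) :
    O (L ++ v ++ R) (L ++ w ++ R) c := by
  obtain h | h | h | h := h
  · obtain ⟨a, ha, ⟨p, s, hv, hw⟩, hc⟩ := h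
    exact Or.inl ⟨a, ha, ⟨L ++ p, s ++ R, by subst hv; simp, by subst hw; simp⟩, hc⟩
  · obtain ⟨a, ha, ⟨p, s, hv, hw⟩, hc⟩ := h
    exact Or.inr (Or.inl ⟨a, ha, ⟨L ++ p, s ++ R, by subst hv; simp, by subst hw; simp⟩, hc⟩)
  · obtain ⟨r, hr, ⟨p, s, hv, hw⟩, hc⟩ := h
    exact Or.inr (Or.inr (Or.inl ⟨r, hr, ⟨L ++ p, s ++ R, by subst hv; simp, by subst hw; simp⟩, hc⟩))
  · obtain ⟨r, hr, ⟨p, s, hv, hw⟩, hc⟩ := h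
    exact Or.inr (Or.inr (Or.inr ⟨r, hr, ⟨L ++ p, s ++ R, by subst hv; simp, by subst hw; simp⟩, hc⟩))

theorem chain_embed {v w : List α} {c : ℕ} (L R : List α) (h : CostChain O v w c) :
    CostChain O (L ++ v ++ R) (L ++ w ++ R) c := by
  induction h with
  | refl => exact CostChain.refl _
  | tail h₁ h₂ ih => exact CostChain.tail ih (orig_embed L R h₂)

end chains

/-- The pending-structure relation: `Pend x u p` means that the `ESym`-string
`u` represents the plain string `x` together with pending (not yet emitted)
original operations of total deferred reduced cost `p`. -/
inductive Pend : List α → List (ESym α) → ℤ → Prop where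
  | nil : Pend [] [] 0
  | base (a : α) {x u p} : Pend x u p → Pend (a :: x) (ESym.base a :: u) p
  | m1 (a b : α × α × α) {x u p} : Pend x u p →
      Pend x (ESym.m1 a b :: u) ((5 * (γ3 (a, b) : ℤ) - 4) + p)
  | blk (m : Mk α) {ξ τ : List α} {t : List (ESym α)} {q : ℤ} {e : ℕ}
      {x : List α} {u : List (ESym α)} {p : ℤ} :
      Pend τ t q →
      CostChain (OrigStep I1 Dl Sb D3 γ3) (ξ ++ m.need) (τ ++ m.give) e →
      Pend x u p →
      Pend (ξ ++ x) (t ++ m.mark ++ u) ((q + 5 * (e : ℤ) - m.off) + p)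

local notation "PD" => Pend I1 Dl Sb D3 γ3

section pendbasics

variable {I1 Dl Sb D3 γ3}

/-- smart constructor -/
theorem blk' (m : Mk α) {ξ τ : List α} {t : List (ESym α)} {q : ℤ} {e : ℕ}
    {x : List α} {u : List (ESym α)} {p : ℤ} {X U P}
    (h1 : PD τ t q)
    (h2 : CostChain O (ξ ++ m.need) (τ ++ m.give) e)
    (h3 : PD x u p)
    (hX : X = ξ ++ x) (hU : U = t ++ m.mark ++ u) (hP : P = (q + 5 * (e : ℤ) - m.off) + p) :
    PD X U P := by
  subst hX; subst hU; subst hP; exact Pend.blk m h1 h2 h3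

theorem pend_concat {x u p y v q} (h : PD x u p) (h' : PD y v q) :
    PD (x ++ y) (u ++ v) (p + q) := by
  induction h with
  | nil => simpa using h'
  | base a h ih => simpa using Pend.base a ih
  | m1 a b h ih =>
      simpa [add_assoc] using Pend.m1 (γ3 := γ3) a b ih
  | blk m h1 h2 h3 ih1 ih3 =>
      exact blk' m h1 h2 ih3 (by simp) (by simp) (by ring)

theorem pend_collapse {χ u q} (h : PD χ u q) (hu : u = []) :
    ∃ E : ℕ, CostChain O χ [] E ∧ q = 5 * (E : ℤ) := by
  induction h with
  | nil => exact ⟨0, CostChain.refl _, by norm_num⟩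
  | base a h ih => simp at hu
  | m1 a b h ih => simp at hu
  | blk m h1 h2 h3 ih1 ih3 =>
      rename_i xi tau t q e x0 u0 p0
      rw [List.append_assoc, List.append_eq_nil_iff] at hu
      obtain ⟨ht, hu2⟩ := hu
      rw [List.append_eq_nil_iff] at hu2
      obtain ⟨hm, hu0⟩ := hu2
      cases m with
      | m2 a b => simp [Mk.mark] at hm
      | m3 a b => simp [Mk.mark] at hm
      | star => simp [Mk.mark] at hm
      | ghost =>
          obtain ⟨E1, c1, hq1⟩ := ih1 ht
          obtain ⟨E3, c3, hp3⟩ := ih3 hu0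
          have c2 : CostChain O xi tau e := by simpa [Mk.need, Mk.give] using h2
          have cA : CostChain O (xi ++ x0) xi E3 := by
            simpa using chain_embed xi ([] : List α) c3
          have : CostChain O (xi ++ x0) ([] : List α) ((E3 + e) + E1) :=
            chain_trans (chain_trans cA c2) c1
          exact ⟨(E3 + e) + E1, this, by subst hq1 hp3; push_cast [Mk.off]; ring⟩

theorem pend_init (v : List α) : PD v (List.map ESym.base v) 0 := by
  induction v with
  | nil => exact Pend.nil
  | cons a v ih => exact Pend.base a ih

theorem pend_extract {x u p} (h : PD x u p) (w : List α) (hu : u = List.map ESym.base w) :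
    ∃ E : ℕ, CostChain O x w E ∧ p = 5 * (E : ℤ) := by
  induction h generalizing w with
  | nil =>
      have : w = [] := by cases w <;> simp_all
      subst this; exact ⟨0, CostChain.refl _, by norm_num⟩
  | base a h ih =>
      cases w with
      | nil => simp at hu
      | cons b w' =>
          rw [List.map_cons] at hu
          injection hu with h1 h2
          injection h1 with hab
          subst hab
          obtain ⟨E, c, hp⟩ := ih w' h2
          exact ⟨E, by simpa using chain_embed [a] ([] : List α) c, hp⟩
  | m1 a b h ih => cases w <;> simp_all
  | blk m h1 h2 h3 ih1 ih3 =>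
      rename_i xi tau t q e x0 u0 p0
      rw [List.append_assoc] at hu
      have hu' := hu.symm
      rw [List.map_eq_append_iff] at hu'
      obtain ⟨w1, w2, hw, hmap1, hmap2⟩ := hu'
      rw [List.map_eq_append_iff] at hmap2
      obtain ⟨w3, w4, hw2, hmap3, hmap4⟩ := hmap2
      cases m with
      | m2 a b => cases w3 <;> simp_all [Mk.mark]
      | m3 a b => cases w3 <;> simp_all [Mk.mark]
      | star => cases w3 <;> simp_all [Mk.mark]
      | ghost =>
          have hw3 : w3 = [] := by cases w3 <;> simp_all [Mk.mark]
          subst hw3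
          obtain ⟨E1, c1, hq1⟩ := ih1 w1 hmap1.symm
          obtain ⟨E3, c3, hp3⟩ := ih3 w4 hmap4.symm
          have c2 : CostChain O xi tau e := by simpa [Mk.need, Mk.give] using h2
          have cA : CostChain O (xi ++ x0) (xi ++ w4) E3 := by
            simpa using chain_embed xi ([] : List α) c3
          have cB : CostChain O (xi ++ w4) (tau ++ w4) e := by
            simpa using chain_embed ([] : List α) w4 c2
          have cC : CostChain O (tau ++ w4) (w1 ++ w4) E1 := by
            simpa using chain_embed ([] : List α) w4 c1
          refine ⟨(E3 + e) + E1, ?_, by subst hq1 hp3; push_cast [Mk.off]; ring⟩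
          have := chain_trans (chain_trans cA cB) cC
          simpa [hw, hw2] using this

theorem pend_snoc_base {χ u q} (h : PD χ u q) :
    ∀ (t : List (ESym α)) (a : α), u = t ++ [ESym.base a] →
    ∃ (τ₁ : List α) (q₁ : ℤ) (E : ℕ), PD τ₁ t q₁ ∧ CostChain O χ (τ₁ ++ [a]) E ∧ q = q₁ + 5 * (E : ℤ) := by
  induction h with
  | nil => intro t a hu; exact absurd hu (by simp)
  | base b h ih =>
      intro t a hu
      cases t with
      | nil =>
          simp only [List.nil_append, List.cons.injEq] at hu
          obtain ⟨hba, hu0⟩ := hu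
          injection hba with hba
          subst hba
          obtain ⟨E0, c0, hp0⟩ := pend_collapse h hu0
          refine ⟨[], 0, E0, Pend.nil, ?_, by omega⟩
          simpa using chain_embed [b] ([] : List α) c0
      | cons s t' =>
          simp only [List.cons_append, List.cons.injEq] at hu
          obtain ⟨hs, hu0⟩ := hu
          obtain ⟨τ₁, q₁, E, hP, hc, hq⟩ := ih t' a hu0
          subst hs
          refine ⟨b :: τ₁, q₁, E, Pend.base b hP, ?_, hq⟩
          simpa using chain_embed [b] ([] : List α) hc
  | m1 a' b' h ih =>
      intro t a hu
      cases t with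
      | nil => simp at hu
      | cons s t' =>
          simp only [List.cons_append, List.cons.injEq] at hu
          obtain ⟨hs, hu0⟩ := hu
          obtain ⟨τ₁, q₁, E, hP, hc, hq⟩ := ih t' a hu0
          subst hs
          exact ⟨τ₁, (5 * (γ3 (a', b') : ℤ) - 4) + q₁, E, Pend.m1 a' b' hP, hc, by omega⟩
  | blk m h1 h2 h3 ih1 ih3 =>
      rename_i xi tau t0 q0 e x0 u0 p0
      intro t a hu
      rcases List.eq_nil_or_concat u0 with h0 | ⟨u0', z, rfl⟩
      · subst h0
        cases m with
        | ghost =>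
            simp only [Mk.mark, List.append_nil] at hu
            obtain ⟨τi, qi, Ei, hPi, hci, hqi⟩ := ih1 t a hu
            obtain ⟨E0, c0, hp0⟩ := pend_collapse h3 rfl
            have c2 : CostChain O xi tau e := by simpa [Mk.need, Mk.give] using h2
            have cA : CostChain O (xi ++ x0) xi E0 := by
              simpa using chain_embed xi ([] : List α) c0
            refine ⟨τi, qi, (E0 + e) + Ei, hPi, chain_trans (chain_trans cA c2) hci, ?_⟩
            subst hqi hp0; push_cast [Mk.off]; ring
        | m2 a' b' =>
            rw [Mk.mark, List.append_nil] at hu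
            obtain ⟨-, h2'⟩ := List.append_inj' hu rfl
            simp at h2'
        | m3 a' b' =>
            rw [Mk.mark, List.append_nil] at hu
            obtain ⟨-, h2'⟩ := List.append_inj' hu rfl
            simp at h2'
        | star =>
            rw [Mk.mark, List.append_nil] at hu
            obtain ⟨-, h2'⟩ := List.append_inj' hu rfl
            simp at h2'
      · rw [List.concat_eq_append,
          show t0 ++ m.mark ++ (u0' ++ [z]) = (t0 ++ m.mark ++ u0') ++ [z] by simp] at hu
        obtain ⟨ht, hz⟩ := List.append_inj' hu rfl
        injection hz.symm with hz'
        obtain ⟨τ₁, q₁, E, hP, hc, hq⟩ := ih3 u0' a (by rw [List.concat_eq_append, hz'])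
        subst ht
        refine ⟨xi ++ τ₁, (q0 + 5 * (e : ℤ) - m.off) + q₁, E,
          Pend.blk m h1 h2 hP, ?_, by omega⟩
        simpa using chain_embed xi ([] : List α) hc

theorem mark_inj {m mk : Mk α} (h : mk.mark = m.mark) : mk = m := by
  cases m <;> cases mk <;> simp_all [Mk.mark]

theorem pend_snoc_mark {χ u q} (h : PD χ u q) :
    ∀ (w : List (ESym α)) (m : Mk α), m.mark ≠ [] → u = w ++ m.mark →
    ∃ (χ₁ : List α) (w₁ ts : List (ESym α)) (τs ξs : List α) (q₁ qs : ℤ) (es : ℕ),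
      χ = χ₁ ++ ξs ∧ w = w₁ ++ ts ∧ PD χ₁ w₁ q₁ ∧ PD τs ts qs ∧
      CostChain O (ξs ++ m.need) (τs ++ m.give) es ∧
      q = q₁ + (qs + 5 * (es : ℤ) - m.off) := by
  induction h with
  | nil =>
      intro w m hm hu
      exact absurd (List.append_eq_nil_iff.mp hu.symm).2 hm
  | base b h ih =>
      intro w m hm hu
      cases w with
      | nil =>
          simp only [List.nil_append] at hu
          cases m <;> simp [Mk.mark] at hu hm <;> simp_all
      | cons s w' =>
          simp only [List.cons_append, List.cons.injEq] at hu
          obtain ⟨hs, hu0⟩ := hu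
          subst hs
          obtain ⟨χ₁, w₁, ts, τs, ξs, q₁, qs, es, hχ, hw, hP1, hPs, hc, hq⟩ := ih w' m hm hu0
          exact ⟨b :: χ₁, ESym.base b :: w₁, ts, τs, ξs, q₁, qs, es,
            by simp [hχ], by simp [hw], Pend.base b hP1, hPs, hc, hq⟩
  | m1 a' b' h ih =>
      intro w m hm hu
      cases w with
      | nil =>
          simp only [List.nil_append] at hu
          cases m <;> simp [Mk.mark] at hu hm
      | cons s w' =>
          simp only [List.cons_append, List.cons.injEq] at hu
          obtain ⟨hs, hu0⟩ := hu
          subst hs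
          obtain ⟨χ₁, w₁, ts, τs, ξs, q₁, qs, es, hχ, hw, hP1, hPs, hc, hq⟩ := ih w' m hm hu0
          exact ⟨χ₁, ESym.m1 a' b' :: w₁, ts, τs, ξs, (5 * (γ3 (a', b') : ℤ) - 4) + q₁, qs, es,
            hχ, by simp [hw], Pend.m1 a' b' hP1, hPs, hc, by omega⟩
  | blk mk h1 h2 h3 ih1 ih3 =>
      rename_i xi tau t0 q0 e x0 u0 p0
      intro w m hm hu
      obtain ⟨μ, hμ⟩ : ∃ μ, m.mark = [μ] := by
        cases m <;> simp [Mk.mark] at hm ⊢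
      rcases List.eq_nil_or_concat u0 with h0 | ⟨u0'', z, rfl⟩
      · subst h0
        rw [hμ, List.append_nil] at hu
        by_cases hgh : mk = Mk.ghost
        · subst hgh
          simp only [Mk.mark, List.append_nil] at hu
          obtain ⟨χi, wi, tsi, τsi, ξsi, q1i, qsi, esi, hχi, hwi, hP1i, hPsi, hci, hqi⟩ :=
            ih1 w m hm (by rw [hu, hμ])
          obtain ⟨E0, c0, hp0⟩ := pend_collapse h3 rfl
          have c2 : CostChain O xi tau e := by
            simpa [show (Mk.ghost : Mk α).need = [] from rfl,
              show (Mk.ghost : Mk α).give = [] from rfl] using h2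
          have cA : CostChain O (xi ++ x0 ++ m.need) (xi ++ m.need) E0 := by
            simpa [List.append_assoc] using chain_embed xi m.need c0
          have cB : CostChain O (xi ++ m.need) (tau ++ m.need) e := by
            simpa using chain_embed ([] : List α) m.need c2
          have cC : CostChain O (tau ++ m.need) ((χi ++ τsi) ++ m.give) esi := by
            have := chain_embed χi ([] : List α) hci
            rw [hχi]
            simpa [List.append_assoc] using this
          refine ⟨[], [], w, χi ++ τsi, xi ++ x0, 0, q1i + qsi, (E0 + e) + esi,
            by simp, by simp, Pend.nil, ?_, chain_trans (chain_trans cA cB) cC, ?_⟩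
          · rw [hwi]; exact pend_concat hP1i hPsi
          · subst hqi hp0; push_cast [Mk.off]; ring
        · obtain ⟨μ', hμ'⟩ : ∃ μ', mk.mark = [μ'] := by
            cases mk
            · exact ⟨_, rfl⟩
            · exact ⟨_, rfl⟩
            · exact ⟨_, rfl⟩
            · exact absurd rfl hgh
          rw [hμ'] at hu
          obtain ⟨ht0, hμμ⟩ := List.append_inj' hu rfl
          have hmkm : mk = m := mark_inj (by rw [hμ', hμ]; exact hμμ)
          subst hmkm
          obtain ⟨E0, c0, hp0⟩ := pend_collapse h3 rfl
          have cA : CostChain O ((xi ++ x0) ++ mk.need) (xi ++ mk.need) E0 := by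
            simpa [List.append_assoc] using chain_embed xi mk.need c0
          refine ⟨[], [], t0, tau, xi ++ x0, 0, q0, E0 + e, by simp, by simp [ht0], Pend.nil, h1,
            chain_trans cA h2, ?_⟩
          subst hp0; push_cast; ring
      · rw [List.concat_eq_append, hμ,
          show t0 ++ mk.mark ++ (u0'' ++ [z]) = (t0 ++ mk.mark ++ u0'') ++ [z] by simp] at hu
        obtain ⟨hw', hz⟩ := List.append_inj' hu rfl
        injection hz.symm with hz'
        obtain ⟨χ₁, w₁, ts, τs, ξs, q₁, qs, es, hχ, hwr, hP1, hPs, hc, hq⟩ :=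
          ih3 u0'' m hm (by rw [List.concat_eq_append, hμ, hz'])
        refine ⟨xi ++ χ₁, t0 ++ mk.mark ++ w₁, ts, τs, ξs,
          (q0 + 5 * (e : ℤ) - mk.off) + q₁, qs, es, by simp [hχ], ?_, Pend.blk mk h1 h2 hP1, hPs, hc, by omega⟩
        rw [← hw']; simp [hwr]

theorem core_R (m' : Mk α) {χ w q} (h : PD χ w q) :
    ∀ (b : α) (S : List (ESym α)), w = ESym.base b :: S →
    ∀ (ξr τr : List α) (tr : List (ESym α)) (qr : ℤ) (er : ℕ),
      PD τr tr qr → CostChain O (ξr ++ b :: m'.need) (τr ++ m'.give) er →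
      PD (ξr ++ χ) (tr ++ m'.mark ++ S) ((qr + 5 * (er : ℤ) - m'.off) + q) := by
  induction h with
  | nil => intro b S hw; simp at hw
  | base a h ih =>
      intro b S hw ξr τr tr qr er hPr hcr
      simp only [List.cons.injEq] at hw
      obtain ⟨hab, hu0⟩ := hw
      injection hab with hab
      subst hab hu0
      exact blk' m' (ξ := ξr ++ [a]) hPr (by simpa [List.append_assoc] using hcr) h
        (by simp) rfl rfl
  | m1 a' b' h ih => intro b S hw; simp at hw
  | blk mk h1 h2 h3 ih1 ih3 =>
      rename_i xi tau t0 q0 e0 x0 u0 p0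
      intro b S hw ξr τr tr qr er hPr hcr
      cases t0 with
      | cons s t1 =>
          simp only [List.cons_append, List.cons.injEq] at hw
          obtain ⟨hs, hrest⟩ := hw
          subst hs
          have hrec := ih1 b t1 rfl ξr τr tr qr er hPr hcr
          have hch : CostChain O ((ξr ++ xi) ++ mk.need) ((ξr ++ tau) ++ mk.give) e0 := by
            simpa [List.append_assoc] using chain_embed ξr ([] : List α) h2
          exact blk' mk hrec hch h3 (by simp) (by rw [← hrest]; simp) (by push_cast; ring)
      | nil =>
          by_cases hgh : mk = Mk.ghost
          · subst hgh
            simp only [Mk.mark, List.nil_append] at hw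
            obtain ⟨E0, c0, hq0⟩ := pend_collapse h1 rfl
            have c2 : CostChain O xi tau e0 := by
              simpa [show (Mk.ghost : Mk α).need = [] from rfl,
                show (Mk.ghost : Mk α).give = [] from rfl] using h2
            have cA : CostChain O ((ξr ++ xi) ++ b :: m'.need) (ξr ++ tau ++ b :: m'.need) e0 := by
              simpa [List.append_assoc] using chain_embed ξr (b :: m'.need) c2
            have cB : CostChain O (ξr ++ tau ++ b :: m'.need) (ξr ++ b :: m'.need) E0 := by
              simpa [List.append_assoc] using chain_embed ξr (b :: m'.need) c0
            have hrec := ih3 b S hw (ξr ++ xi) τr tr qr ((e0 + E0) + er) hPr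
              (chain_trans (chain_trans cA cB) hcr)
            have heq : (qr + 5 * (((e0 + E0) + er : ℕ) : ℤ) - m'.off) + p0
                = (qr + 5 * (er : ℤ) - m'.off) + ((q0 + 5 * (e0 : ℤ) - (Mk.ghost : Mk α).off) + p0) := by
              subst hq0; push_cast [Mk.off]; ring
            rw [show ξr ++ (xi ++ x0) = (ξr ++ xi) ++ x0 by simp, ← heq]
            simpa using hrec
          · obtain ⟨μ', hμ'⟩ : ∃ μ', mk.mark = [μ'] := by
              cases mk
              · exact ⟨_, rfl⟩
              · exact ⟨_, rfl⟩
              · exact ⟨_, rfl⟩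
              · exact absurd rfl hgh
            rw [hμ', List.nil_append] at hw
            simp only [List.cons_append, List.cons.injEq] at hw
            obtain ⟨hμb, -⟩ := hw
            exfalso
            cases mk <;> simp [Mk.mark] at hμ' <;> subst hμ' <;> simp at hμb

theorem core_E {r : (α × α × α) × (α × α × α)} (hr : r ∈ D3) {χ w q} (h : PD χ w q) :
    ∀ S : List (ESym α), w = ESym.m1 r.1 r.2 :: S →
    ∀ (ξa τa : List α) (Ta : List (ESym α)) (qa : ℤ) (ea : ℕ),
      PD τa Ta qa → CostChain O ξa (τa ++ [r.1.1]) ea →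
      PD (ξa ++ χ) (Ta ++ ESym.base r.2.1 :: ESym.m2 r.1 r.2 :: S)
        ((qa + 5 * (ea : ℤ)) + q + 1) := by
  induction h with
  | nil => intro S hw; simp at hw
  | base a h ih => intro S hw; simp at hw
  | m1 a' b' h ih =>
      intro S hw ξa τa Ta qa ea hPa hca
      simp only [List.cons.injEq] at hw
      obtain ⟨hab, hu0⟩ := hw
      injection hab with ha hb
      subst ha hb hu0
      have hsub : O (τa ++ [r.1.1, r.1.2.1, r.1.2.2]) (τa ++ [r.2.1, r.2.2.1, r.2.2.2]) (γ3 r) :=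
        Or.inr (Or.inr (Or.inr ⟨r, hr, ⟨τa, [], by simp, by simp⟩, rfl⟩))
      have hneed : (Mk.m2 r.1 r.2).need = [r.1.2.1, r.1.2.2] := rfl
      have hgive : (Mk.m2 r.1 r.2).give = [r.2.2.1, r.2.2.2] := rfl
      have cE : CostChain O (ξa ++ (Mk.m2 r.1 r.2).need)
          ((τa ++ [r.2.1]) ++ (Mk.m2 r.1 r.2).give) (ea + γ3 r) := by
        rw [hneed, hgive]
        have c1 : CostChain O (ξa ++ [r.1.2.1, r.1.2.2])
            (τa ++ [r.1.1, r.1.2.1, r.1.2.2]) ea := by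
          simpa [List.append_assoc] using chain_embed ([] : List α) [r.1.2.1, r.1.2.2] hca
        have := CostChain.tail c1 hsub
        simpa [List.append_assoc] using this
      have hPt : PD (τa ++ [r.2.1]) (Ta ++ [ESym.base r.2.1]) (qa + 0) :=
        pend_concat hPa (Pend.base r.2.1 Pend.nil)
      refine blk' (Mk.m2 r.1 r.2) hPt cE h rfl (by simp [Mk.mark]) ?_
      have hγ : γ3 (r.1, r.2) = γ3 r := by rw [Prod.mk.eta]
      rw [hγ]
      show _ = ((qa + 0) + 5 * ((ea + γ3 r : ℕ) : ℤ) - (3 : ℤ)) + _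
      push_cast; ring
  | blk mk h1 h2 h3 ih1 ih3 =>
      rename_i xi tau t0 q0 e0 x0 u0 p0
      intro S hw ξa τa Ta qa ea hPa hca
      cases t0 with
      | cons s t1 =>
          simp only [List.cons_append, List.cons.injEq] at hw
          obtain ⟨hs, hrest⟩ := hw
          subst hs
          have hrec := ih1 t1 rfl ξa τa Ta qa ea hPa hca
          have hch : CostChain O ((ξa ++ xi) ++ mk.need) ((ξa ++ tau) ++ mk.give) e0 := by
            simpa [List.append_assoc] using chain_embed ξa ([] : List α) h2
          exact blk' mk hrec hch h3 (by simp) (by rw [← hrest]; simp) (by push_cast; ring)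
      | nil =>
          by_cases hgh : mk = Mk.ghost
          · subst hgh
            simp only [Mk.mark, List.nil_append] at hw
            obtain ⟨E0, c0, hq0⟩ := pend_collapse h1 rfl
            have c2 : CostChain O xi tau e0 := by
              simpa [show (Mk.ghost : Mk α).need = [] from rfl,
                show (Mk.ghost : Mk α).give = [] from rfl] using h2
            have cA : CostChain O (ξa ++ xi) (ξa ++ tau) e0 := by
              simpa using chain_embed ξa ([] : List α) c2
            have cB : CostChain O (ξa ++ tau) ξa E0 := by
              simpa using chain_embed ξa ([] : List α) c0
            have hrec := ih3 S hw (ξa ++ xi) τa Ta qa ((e0 + E0) + ea) hPa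
              (chain_trans (chain_trans cA cB) hca)
            have heq : (qa + 5 * (((e0 + E0) + ea : ℕ) : ℤ)) + p0 + 1
                = (qa + 5 * (ea : ℤ)) + ((q0 + 5 * (e0 : ℤ) - (Mk.ghost : Mk α).off) + p0) + 1 := by
              subst hq0; push_cast [Mk.off]; ring
            rw [show ξa ++ (xi ++ x0) = (ξa ++ xi) ++ x0 by simp, ← heq]
            exact hrec
          · obtain ⟨μ', hμ'⟩ : ∃ μ', mk.mark = [μ'] := by
              cases mk
              · exact ⟨_, rfl⟩
              · exact ⟨_, rfl⟩
              · exact ⟨_, rfl⟩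
              · exact absurd rfl hgh
            rw [hμ', List.nil_append] at hw
            simp only [List.cons_append, List.cons.injEq] at hw
            obtain ⟨hμb, -⟩ := hw
            exfalso
            cases mk <;> simp [Mk.mark] at hμ' <;> subst hμ' <;> simp at hμb

theorem split1 {X : Type*} {t m u P S : List X} {y : X} (h : t ++ m ++ u = P ++ y :: S) :
    (∃ a', t = P ++ y :: a' ∧ S = a' ++ m ++ u)
  ∨ (∃ m₁ m₂, m = m₁ ++ y :: m₂ ∧ P = t ++ m₁ ∧ S = m₂ ++ u)
  ∨ (∃ w₁, P = t ++ m ++ w₁ ∧ u = w₁ ++ y :: S) := by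
  rw [List.append_assoc] at h
  rcases List.append_eq_append_iff.mp h with ⟨a', hP, hmu⟩ | ⟨c', ht, hyS⟩
  · rcases List.append_eq_append_iff.mp hmu with ⟨x, ha', hu⟩ | ⟨x, hm, hyS⟩
    · exact Or.inr (Or.inr ⟨x, by rw [hP, ha']; simp, hu⟩)
    · cases x with
      | nil =>
          simp only [List.append_nil] at hm
          exact Or.inr (Or.inr ⟨[], by rw [hP, hm]; simp, by simpa using hyS.symm⟩)
      | cons z x' =>
          simp only [List.cons_append, List.cons.injEq] at hyS
          obtain ⟨hz, hS⟩ := hyS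
          subst hz
          exact Or.inr (Or.inl ⟨a', x', hm, hP, hS⟩)
  · cases c' with
    | nil =>
        simp only [List.append_nil] at ht
        cases m with
        | nil =>
            exact Or.inr (Or.inr ⟨[], by rw [ht]; simp, by simpa using hyS.symm⟩)
        | cons z m' =>
            simp only [List.nil_append, List.cons_append, List.cons.injEq] at hyS
            obtain ⟨hz, hS⟩ := hyS
            subst hz
            exact Or.inr (Or.inl ⟨[], m', rfl, by rw [ht]; simp, hS⟩)
    | cons z c'2 =>
        simp only [List.cons_append, List.cons.injEq] at hyS
        obtain ⟨hz, hS⟩ := hyS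
        subst hz
        exact Or.inl ⟨c'2, by rw [ht], by rw [hS]; simp⟩

theorem split2 {X : Type*} {t m u P S : List X} {y z : X}
    (h : t ++ m ++ u = P ++ y :: z :: S) :
    (∃ a', t = P ++ y :: z :: a' ∧ S = a' ++ m ++ u)
  ∨ (t = P ++ [y] ∧ m ++ u = z :: S)
  ∨ (∃ m₁ m₂, m = m₁ ++ y :: z :: m₂ ∧ P = t ++ m₁ ∧ S = m₂ ++ u)
  ∨ (∃ m₁, m = m₁ ++ [y] ∧ P = t ++ m₁ ∧ u = z :: S)
  ∨ (∃ w₁, P = t ++ m ++ w₁ ∧ u = w₁ ++ y :: z :: S) := by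
  rcases split1 (y := y) (by simpa using h) with ⟨a', ht, hS⟩ | ⟨m₁, m₂, hm, hP, hS⟩ | ⟨w₁, hP, hu⟩
  · -- y in t : t = P ++ y :: a', z :: S = a' ++ m ++ u
    cases a' with
    | nil =>
        simp only [List.nil_append] at hS
        exact Or.inr (Or.inl ⟨by simpa using ht, hS.symm⟩)
    | cons z' a'' =>
        simp only [List.cons_append, List.cons.injEq] at hS
        obtain ⟨hz, hS⟩ := hS
        subst hz
        exact Or.inl ⟨a'', ht, hS⟩
  · -- y in m : m = m₁ ++ y :: m₂, z :: S = m₂ ++ u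
    cases m₂ with
    | nil =>
        simp only [List.nil_append] at hS
        exact Or.inr (Or.inr (Or.inr (Or.inl ⟨m₁, by simpa using hm, hP, hS.symm⟩)))
    | cons z' m₂' =>
        simp only [List.cons_append, List.cons.injEq] at hS
        obtain ⟨hz, hS⟩ := hS
        subst hz
        exact Or.inr (Or.inr (Or.inl ⟨m₁, m₂', hm, hP, hS⟩))
  · -- y in u : u = w₁ ++ y :: z :: S
    exact Or.inr (Or.inr (Or.inr (Or.inr ⟨w₁, hP, hu⟩)))

theorem pend_ins {U : List (ESym α)} {c : ℤ}
    (bld : ∀ ⦃y : List α⦄ ⦃v : List (ESym α)⦄ ⦃q' : ℤ⦄, PD y v q' → PD y (U ++ v) (c + q'))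
    {x u p} (h : PD x u p) :
    ∀ P S : List (ESym α), u = P ++ S → PD x (P ++ U ++ S) (p + c) := by
  induction h with
  | nil =>
      intro P S hu
      obtain ⟨hP, hS⟩ := List.append_eq_nil_iff.mp hu.symm
      subst hP; subst hS
      simpa [add_comm] using bld Pend.nil
  | base a h ih =>
      intro P S hu
      cases P with
      | nil =>
          simp only [List.nil_append] at hu ⊢
          rw [← hu, add_comm]
          exact bld (Pend.base a h)
      | cons s P' =>
          simp only [List.cons_append, List.cons.injEq] at hu
          obtain ⟨hs, hu'⟩ := hu
          subst hs
          simpa using Pend.base a (ih P' S hu')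
  | m1 a' b' h ih =>
      intro P S hu
      cases P with
      | nil =>
          simp only [List.nil_append] at hu ⊢
          rw [← hu]
          have := bld (Pend.m1 a' b' h)
          convert this using 1
          ring
      | cons s P' =>
          simp only [List.cons_append, List.cons.injEq] at hu
          obtain ⟨hs, hu'⟩ := hu
          subst hs
          have := Pend.m1 (γ3 := γ3) a' b' (ih P' S hu')
          simpa [add_assoc] using this
  | blk mk h1 h2 h3 ih1 ih3 =>
      rename_i xi tau t0 q0 e0 x0 u0 p0
      intro P S hu
      rw [List.append_assoc] at hu
      rcases List.append_eq_append_iff.mp hu with ⟨a', hP, hrest⟩ | ⟨c', ht, hS⟩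
      · rcases List.append_eq_append_iff.mp hrest with ⟨w₁, ha', hu0⟩ | ⟨x', hmark, hS⟩
        · -- insertion inside u0
          have hrec := ih3 w₁ S hu0
          refine blk' mk h1 h2 hrec rfl ?_ (by push_cast; ring)
          rw [hP, ha']; simp
        · cases a' with
          | nil =>
              -- boundary between t0 and mark
              have hrec := ih1 t0 [] (by simp)
              simp only [List.nil_append] at hmark
              refine blk' mk hrec h2 h3 rfl ?_ (by push_cast; ring)
              rw [hP, hS, ← hmark]; simp
          | cons μ a'2 =>
              -- boundary between mark and u0 (mark = a' and x' = [])
              have hx : x' = [] := by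
                have hlen : mk.mark.length ≤ 1 := by cases mk <;> simp [Mk.mark]
                rw [hmark] at hlen
                simp only [List.length_append, List.length_cons] at hlen
                exact List.eq_nil_of_length_eq_zero (by omega)
              subst hx
              rw [List.append_nil] at hmark
              have hrec := ih3 [] u0 (by simp)
              refine blk' mk h1 h2 hrec rfl ?_ (by push_cast; ring)
              rw [hP, ← hmark, hS]; simp
      · -- insertion inside t0
        have hrec := ih1 P c' ht
        refine blk' mk hrec h2 h3 rfl ?_ (by push_cast; ring)
        rw [hS]; simp

theorem pend_base1 {a : α} {U' : List (ESym α)}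
    (bld : ∀ ⦃y : List α⦄ ⦃v : List (ESym α)⦄ ⦃q' : ℤ⦄, PD y v q' → PD (a :: y) (U' ++ v) (5 + q'))
    {x u p} (h : PD x u p) :
    ∀ P S : List (ESym α), u = P ++ ESym.base a :: S → PD x (P ++ U' ++ S) (p + 5) := by
  induction h with
  | nil => intro P S hu; simp at hu
  | base b h ih =>
      intro P S hu
      cases P with
      | nil =>
          simp only [List.nil_append, List.cons.injEq] at hu
          obtain ⟨hb, hS⟩ := hu
          injection hb with hb
          subst hb; subst hS
          simpa [add_comm] using bld h
      | cons s P' =>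
          simp only [List.cons_append, List.cons.injEq] at hu
          obtain ⟨hs, hu'⟩ := hu
          subst hs
          simpa using Pend.base b (ih P' S hu')
  | m1 a' b' h ih =>
      intro P S hu
      cases P with
      | nil => simp at hu
      | cons s P' =>
          simp only [List.cons_append, List.cons.injEq] at hu
          obtain ⟨hs, hu'⟩ := hu
          subst hs
          simpa [add_assoc] using Pend.m1 (γ3 := γ3) a' b' (ih P' S hu')
  | blk mk h1 h2 h3 ih1 ih3 =>
      rename_i xi tau t0 q0 e0 x0 u0 p0
      intro P S hu
      rcases split1 hu with ⟨a'', ht, hS⟩ | ⟨m₁, m₂, hm, hP, hS⟩ | ⟨w₁, hP, hu0⟩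
      · have hrec := ih1 P a'' ht
        refine blk' mk hrec h2 h3 rfl ?_ (by push_cast; ring)
        rw [hS]; simp
      · exfalso
        have hlen : mk.mark.length ≤ 1 := by cases mk <;> simp [Mk.mark]
        rw [hm] at hlen
        simp only [List.length_append, List.length_cons] at hlen
        have hm1 : m₁ = [] := List.eq_nil_of_length_eq_zero (by omega)
        have hm2 : m₂ = [] := List.eq_nil_of_length_eq_zero (by omega)
        subst hm1; subst hm2
        cases mk <;> simp [Mk.mark] at hm
      · have hrec := ih3 w₁ S hu0
        refine blk' mk h1 h2 hrec rfl ?_ (by push_cast; ring)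
        rw [hP]; simp

theorem pend_star1 {x u p} (h : PD x u p) :
    ∀ P S : List (ESym α), u = P ++ ESym.star :: S → PD x (P ++ S) (p + 1) := by
  induction h with
  | nil => intro P S hu; simp at hu
  | base b h ih =>
      intro P S hu
      cases P with
      | nil => simp at hu
      | cons s P' =>
          simp only [List.cons_append, List.cons.injEq] at hu
          obtain ⟨hs, hu'⟩ := hu
          subst hs
          simpa using Pend.base b (ih P' S hu')
  | m1 a' b' h ih =>
      intro P S hu
      cases P with
      | nil => simp at hu
      | cons s P' =>
          simp only [List.cons_append, List.cons.injEq] at hu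
          obtain ⟨hs, hu'⟩ := hu
          subst hs
          simpa [add_assoc] using Pend.m1 (γ3 := γ3) a' b' (ih P' S hu')
  | blk mk h1 h2 h3 ih1 ih3 =>
      rename_i xi tau t0 q0 e0 x0 u0 p0
      intro P S hu
      rcases split1 hu with ⟨a'', ht, hS⟩ | ⟨m₁, m₂, hm, hP, hS⟩ | ⟨w₁, hP, hu0⟩
      · have hrec := ih1 P a'' ht
        refine blk' mk hrec h2 h3 rfl ?_ (by push_cast; ring)
        rw [hS]; simp
      · have hlen : mk.mark.length ≤ 1 := by cases mk <;> simp [Mk.mark]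
        rw [hm] at hlen
        simp only [List.length_append, List.length_cons] at hlen
        have hm1 : m₁ = [] := List.eq_nil_of_length_eq_zero (by omega)
        have hm2 : m₂ = [] := List.eq_nil_of_length_eq_zero (by omega)
        subst hm1; subst hm2
        have hmk : mk = Mk.star := by
          cases mk <;> simp [Mk.mark] at hm ⊢
        subst hmk
        simp only [List.nil_append] at hP hS
        refine blk' Mk.ghost h1 h2 h3 rfl ?_ ?_
        · rw [hP, hS]; simp [Mk.mark]
        · simp [Mk.off]; ring
      · have hrec := ih3 w₁ S hu0
        refine blk' mk h1 h2 hrec rfl ?_ (by push_cast; ring)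
        rw [hP]; simp

theorem pendE {r : (α × α × α) × (α × α × α)} (hr : r ∈ D3) {x u p} (h : PD x u p) :
    ∀ P S : List (ESym α), u = P ++ ESym.base r.1.1 :: ESym.m1 r.1 r.2 :: S →
    PD x (P ++ ESym.base r.2.1 :: ESym.m2 r.1 r.2 :: S) (p + 1) := by
  induction h with
  | nil => intro P S hu; simp at hu
  | base b h ih =>
      intro P S hu
      cases P with
      | nil =>
          simp only [List.nil_append, List.cons.injEq] at hu
          obtain ⟨hb, hu'⟩ := hu
          injection hb with hb
          subst hb
          have := core_E hr h S hu' [r.1.1] [] [] 0 0 Pend.nil (by simpa using CostChain.refl [r.1.1])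
          simpa [add_comm] using this
      | cons s P' =>
          simp only [List.cons_append, List.cons.injEq] at hu
          obtain ⟨hs, hu'⟩ := hu
          subst hs
          simpa using Pend.base b (ih P' S hu')
  | m1 a' b' h ih =>
      intro P S hu
      cases P with
      | nil => simp at hu
      | cons s P' =>
          simp only [List.cons_append, List.cons.injEq] at hu
          obtain ⟨hs, hu'⟩ := hu
          subst hs
          simpa [add_assoc] using Pend.m1 (γ3 := γ3) a' b' (ih P' S hu')
  | blk mk h1 h2 h3 ih1 ih3 =>
      rename_i xi tau t0 q0 e0 x0 u0 p0
      intro P S hu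
      rcases split2 hu with ⟨a'', ht, hS⟩ | ⟨ht, hmu⟩ | ⟨m₁, m₂, hm, hP, hS⟩ |
        ⟨m₁, hm, hP, hu0⟩ | ⟨w₁, hP, hu0⟩
      · have hrec := ih1 P a'' ht
        refine blk' mk hrec h2 h3 rfl ?_ (by push_cast; ring)
        rw [hS]; simp
      · -- base r.1.1 ends t0, m1 begins mark ++ u0
        by_cases hgh : mk = Mk.ghost
        · subst hgh
          simp only [Mk.mark, List.nil_append] at hmu
          obtain ⟨τ₁, q₁, E, hP1, hc1, hq1⟩ := pend_snoc_base h1 P r.1.1 ht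
          have c2 : CostChain O xi tau e0 := by
            simpa [show (Mk.ghost : Mk α).need = [] from rfl,
              show (Mk.ghost : Mk α).give = [] from rfl] using h2
          have hca : CostChain O xi (τ₁ ++ [r.1.1]) (e0 + E) := chain_trans c2 hc1
          have := core_E hr h3 S hmu xi τ₁ P q₁ (e0 + E) hP1 hca
          rw [show xi ++ x0 = xi ++ x0 from rfl]
          have heq : (q₁ + 5 * ((e0 + E : ℕ) : ℤ)) + p0 + 1
              = ((q0 + 5 * (e0 : ℤ) - (Mk.ghost : Mk α).off) + p0) + 1 := by
            subst hq1; push_cast [Mk.off]; ring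
          rw [show (Mk.ghost : Mk α).mark = [] from rfl] at *
          rw [← heq]
          simpa using this
        · exfalso
          obtain ⟨μ', hμ'⟩ : ∃ μ', mk.mark = [μ'] := by
            cases mk
            · exact ⟨_, rfl⟩
            · exact ⟨_, rfl⟩
            · exact ⟨_, rfl⟩
            · exact absurd rfl hgh
          rw [hμ'] at hmu
          simp only [List.cons_append, List.cons.injEq] at hmu
          obtain ⟨hμb, -⟩ := hmu
          cases mk <;> simp [Mk.mark] at hμ' <;> subst hμ' <;> simp at hμb
      · exfalso
        have hlen : mk.mark.length ≤ 1 := by cases mk <;> simp [Mk.mark]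
        rw [hm] at hlen
        simp only [List.length_append, List.length_cons] at hlen
        omega
      · exfalso
        have hlen : mk.mark.length ≤ 1 := by cases mk <;> simp [Mk.mark]
        rw [hm] at hlen
        simp only [List.length_append, List.length_cons] at hlen
        have hm1 : m₁ = [] := List.eq_nil_of_length_eq_zero (by omega)
        subst hm1
        simp only [List.nil_append] at hm
        cases mk <;> simp [Mk.mark] at hm
      · have hrec := ih3 w₁ S hu0
        refine blk' mk h1 h2 hrec rfl ?_ (by push_cast; ring)
        rw [hP]; simp

theorem pendF {r : (α × α × α) × (α × α × α)} {x u p} (h : PD x u p) :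
    ∀ P S : List (ESym α), u = P ++ ESym.m2 r.1 r.2 :: ESym.base r.1.2.1 :: S →
    PD x (P ++ ESym.base r.2.2.1 :: ESym.m3 r.1 r.2 :: S) (p + 1) := by
  induction h with
  | nil => intro P S hu; simp at hu
  | base b h ih =>
      intro P S hu
      cases P with
      | nil => simp at hu
      | cons s P' =>
          simp only [List.cons_append, List.cons.injEq] at hu
          obtain ⟨hs, hu'⟩ := hu
          subst hs
          simpa using Pend.base b (ih P' S hu')
  | m1 a' b' h ih =>
      intro P S hu
      cases P with
      | nil => simp at hu
      | cons s P' =>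
          simp only [List.cons_append, List.cons.injEq] at hu
          obtain ⟨hs, hu'⟩ := hu
          subst hs
          simpa [add_assoc] using Pend.m1 (γ3 := γ3) a' b' (ih P' S hu')
  | blk mk h1 h2 h3 ih1 ih3 =>
      rename_i xi tau t0 q0 e0 x0 u0 p0
      intro P S hu
      rcases split2 hu with ⟨a'', ht, hS⟩ | ⟨ht, hmu⟩ | ⟨m₁, m₂, hm, hP, hS⟩ |
        ⟨m₁, hm, hP, hu0⟩ | ⟨w₁, hP, hu0⟩
      · have hrec := ih1 P a'' ht
        refine blk' mk hrec h2 h3 rfl ?_ (by push_cast; ring)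
        rw [hS]; simp
      · -- m2 ends t0 (deep-left), base r.1.2.1 begins mark ++ u0
        by_cases hgh : mk = Mk.ghost
        · subst hgh
          simp only [Mk.mark, List.nil_append] at hmu
          have hmark2 : (Mk.m2 r.1 r.2 : Mk α).mark = [ESym.m2 r.1 r.2] := rfl
          obtain ⟨χ₁, w₁, ts, τs, ξs, q₁, qs, es, hχ, hw, hP1, hPs, hcs, hq⟩ :=
            pend_snoc_mark h1 P (Mk.m2 r.1 r.2) (by simp [hmark2]) (by rw [ht, hmark2])
          have c2 : CostChain O xi tau e0 := by
            simpa [show (Mk.ghost : Mk α).need = [] from rfl,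
              show (Mk.ghost : Mk α).give = [] from rfl] using h2
          -- package chain
          have hneed3 : (Mk.m3 r.1 r.2 : Mk α).need = [r.1.2.2] := rfl
          have hgive3 : (Mk.m3 r.1 r.2 : Mk α).give = [r.2.2.2] := rfl
          have cA : CostChain O (xi ++ r.1.2.1 :: (Mk.m3 r.1 r.2 : Mk α).need)
              (tau ++ [r.1.2.1, r.1.2.2]) e0 := by
            simpa [hneed3, List.append_assoc] using chain_embed ([] : List α) [r.1.2.1, r.1.2.2] c2
          have cB : CostChain O (tau ++ [r.1.2.1, r.1.2.2])
              ((χ₁ ++ τs ++ [r.2.2.1]) ++ (Mk.m3 r.1 r.2 : Mk α).give) es := by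
            have := chain_embed χ₁ ([] : List α) hcs
            rw [hχ, hgive3]
            simpa [show (Mk.m2 r.1 r.2 : Mk α).need = [r.1.2.1, r.1.2.2] from rfl,
              show (Mk.m2 r.1 r.2 : Mk α).give = [r.2.2.1, r.2.2.2] from rfl,
              List.append_assoc] using this
          have hPt : PD (χ₁ ++ τs ++ [r.2.2.1]) (w₁ ++ ts ++ [ESym.base r.2.2.1])
              ((q₁ + qs) + 0) := by
            have := pend_concat (pend_concat hP1 hPs) (Pend.base r.2.2.1 Pend.nil)
            simpa [List.append_assoc] using this
          have hcore := core_R (Mk.m3 r.1 r.2) h3 r.1.2.1 S hmu xi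
            (χ₁ ++ τs ++ [r.2.2.1]) (w₁ ++ ts ++ [ESym.base r.2.2.1]) ((q₁ + qs) + 0)
            (e0 + es) hPt (chain_trans cA cB)
          have hmark3 : (Mk.m3 r.1 r.2 : Mk α).mark = [ESym.m3 r.1 r.2] := rfl
          rw [hmark3] at hcore
          have hU : (w₁ ++ ts ++ [ESym.base r.2.2.1]) ++ [ESym.m3 r.1 r.2] ++ S
              = P ++ ESym.base r.2.2.1 :: ESym.m3 r.1 r.2 :: S := by
            rw [hw]; simp
          rw [hU] at hcore
          have hoff3 : (Mk.m3 r.1 r.2 : Mk α).off = 2 := rfl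
          have heq : (((q₁ + qs) + 0) + 5 * ((e0 + es : ℕ) : ℤ) - (Mk.m3 r.1 r.2 : Mk α).off) + p0
              = ((q0 + 5 * (e0 : ℤ) - (Mk.ghost : Mk α).off) + p0) + 1 := by
            rw [hoff3]
            have hoff2 : (Mk.m2 r.1 r.2 : Mk α).off = 3 := rfl
            rw [hoff2] at hq
            subst hq; push_cast [Mk.off]; ring
          rw [show (Mk.ghost : Mk α).mark = [] from rfl] at *
          rw [← heq]
          simpa using hcore
        · exfalso
          obtain ⟨μ', hμ'⟩ : ∃ μ', mk.mark = [μ'] := by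
            cases mk
            · exact ⟨_, rfl⟩
            · exact ⟨_, rfl⟩
            · exact ⟨_, rfl⟩
            · exact absurd rfl hgh
          rw [hμ'] at hmu
          simp only [List.cons_append, List.cons.injEq] at hmu
          obtain ⟨hμb, -⟩ := hmu
          cases mk <;> simp [Mk.mark] at hμ' <;> subst hμ' <;> simp at hμb
      · exfalso
        have hlen : mk.mark.length ≤ 1 := by cases mk <;> simp [Mk.mark]
        rw [hm] at hlen
        simp only [List.length_append, List.length_cons] at hlen
        omega
      · -- the main case : m2 is the mark of this block
        have hm1 : m₁ = [] := by
          have hlen : mk.mark.length ≤ 1 := by cases mk <;> simp [Mk.mark]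
          rw [hm] at hlen
          simp only [List.length_append, List.length_cons] at hlen
          exact List.eq_nil_of_length_eq_zero (by omega)
        subst hm1
        simp only [List.nil_append] at hm hP
        obtain ⟨ha, hb⟩ : mk = Mk.m2 r.1 r.2 ∧ True := by
          cases mk <;> simp [Mk.mark] at hm
          case m2 a' b' => obtain ⟨h1', h2'⟩ := hm; subst h1'; subst h2'; exact ⟨rfl, trivial⟩
        subst ha
        have hPt : PD (tau ++ [r.2.2.1]) (t0 ++ [ESym.base r.2.2.1]) (q0 + 0) :=
          pend_concat h1 (Pend.base r.2.2.1 Pend.nil)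
        have hch : CostChain O (xi ++ r.1.2.1 :: (Mk.m3 r.1 r.2 : Mk α).need)
            ((tau ++ [r.2.2.1]) ++ (Mk.m3 r.1 r.2 : Mk α).give) e0 := by
          simpa [show (Mk.m2 r.1 r.2 : Mk α).need = [r.1.2.1, r.1.2.2] from rfl,
            show (Mk.m2 r.1 r.2 : Mk α).give = [r.2.2.1, r.2.2.2] from rfl,
            show (Mk.m3 r.1 r.2 : Mk α).need = [r.1.2.2] from rfl,
            show (Mk.m3 r.1 r.2 : Mk α).give = [r.2.2.2] from rfl,
            List.append_assoc] using h2
        have hcore := core_R (Mk.m3 r.1 r.2) h3 r.1.2.1 S hu0 xi (tau ++ [r.2.2.1])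
          (t0 ++ [ESym.base r.2.2.1]) (q0 + 0) e0 hPt hch
        rw [hP]
        have hmark3 : (Mk.m3 r.1 r.2 : Mk α).mark = [ESym.m3 r.1 r.2] := rfl
        rw [hmark3] at hcore
        have heq : (((q0 + 0) + 5 * (e0 : ℤ) - (Mk.m3 r.1 r.2 : Mk α).off) + p0)
            = ((q0 + 5 * (e0 : ℤ) - (Mk.m2 r.1 r.2 : Mk α).off) + p0) + 1 := by
          show _ + 5 * (e0 : ℤ) - 2 + _ = (_ + 5 * (e0 : ℤ) - 3 + _) + 1
          ring
        rw [← heq]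
        simpa using hcore
      · have hrec := ih3 w₁ S hu0
        refine blk' mk h1 h2 hrec rfl ?_ (by push_cast; ring)
        rw [hP]; simp

theorem pendG {r : (α × α × α) × (α × α × α)} {x u p} (h : PD x u p) :
    ∀ P S : List (ESym α), u = P ++ ESym.m3 r.1 r.2 :: ESym.base r.1.2.2 :: S →
    PD x (P ++ ESym.base r.2.2.2 :: ESym.star :: S) (p + 1) := by
  induction h with
  | nil => intro P S hu; simp at hu
  | base b h ih =>
      intro P S hu
      cases P with
      | nil => simp at hu
      | cons s P' =>
          simp only [List.cons_append, List.cons.injEq] at hu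
          obtain ⟨hs, hu'⟩ := hu
          subst hs
          simpa using Pend.base b (ih P' S hu')
  | m1 a' b' h ih =>
      intro P S hu
      cases P with
      | nil => simp at hu
      | cons s P' =>
          simp only [List.cons_append, List.cons.injEq] at hu
          obtain ⟨hs, hu'⟩ := hu
          subst hs
          simpa [add_assoc] using Pend.m1 (γ3 := γ3) a' b' (ih P' S hu')
  | blk mk h1 h2 h3 ih1 ih3 =>
      rename_i xi tau t0 q0 e0 x0 u0 p0
      intro P S hu
      rcases split2 hu with ⟨a'', ht, hS⟩ | ⟨ht, hmu⟩ | ⟨m₁, m₂, hm, hP, hS⟩ |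
        ⟨m₁, hm, hP, hu0⟩ | ⟨w₁, hP, hu0⟩
      · have hrec := ih1 P a'' ht
        refine blk' mk hrec h2 h3 rfl ?_ (by push_cast; ring)
        rw [hS]; simp
      · -- m3 ends t0 (deep-left), base r.1.2.2 begins mark ++ u0
        by_cases hgh : mk = Mk.ghost
        · subst hgh
          simp only [Mk.mark, List.nil_append] at hmu
          have hmark3 : (Mk.m3 r.1 r.2 : Mk α).mark = [ESym.m3 r.1 r.2] := rfl
          obtain ⟨χ₁, w₁, ts, τs, ξs, q₁, qs, es, hχ, hw, hP1, hPs, hcs, hq⟩ :=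
            pend_snoc_mark h1 P (Mk.m3 r.1 r.2) (by simp [hmark3]) (by rw [ht, hmark3])
          have c2 : CostChain O xi tau e0 := by
            simpa [show (Mk.ghost : Mk α).need = [] from rfl,
              show (Mk.ghost : Mk α).give = [] from rfl] using h2
          have cA : CostChain O (xi ++ r.1.2.2 :: (Mk.star : Mk α).need)
              (tau ++ [r.1.2.2]) e0 := by
            simpa [show (Mk.star : Mk α).need = [] from rfl, List.append_assoc]
              using chain_embed ([] : List α) [r.1.2.2] c2
          have cB : CostChain O (tau ++ [r.1.2.2])
              ((χ₁ ++ τs ++ [r.2.2.2]) ++ (Mk.star : Mk α).give) es := by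
            have := chain_embed χ₁ ([] : List α) hcs
            rw [hχ, show (Mk.star : Mk α).give = [] from rfl]
            simpa [show (Mk.m3 r.1 r.2 : Mk α).need = [r.1.2.2] from rfl,
              show (Mk.m3 r.1 r.2 : Mk α).give = [r.2.2.2] from rfl,
              List.append_assoc] using this
          have hPt : PD (χ₁ ++ τs ++ [r.2.2.2]) (w₁ ++ ts ++ [ESym.base r.2.2.2])
              ((q₁ + qs) + 0) := by
            have := pend_concat (pend_concat hP1 hPs) (Pend.base r.2.2.2 Pend.nil)
            simpa [List.append_assoc] using this
          have hcore := core_R (Mk.star) h3 r.1.2.2 S hmu xi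
            (χ₁ ++ τs ++ [r.2.2.2]) (w₁ ++ ts ++ [ESym.base r.2.2.2]) ((q₁ + qs) + 0)
            (e0 + es) hPt (chain_trans cA cB)
          rw [show (Mk.star : Mk α).mark = [ESym.star] from rfl] at hcore
          have hU : (w₁ ++ ts ++ [ESym.base r.2.2.2]) ++ [ESym.star] ++ S
              = P ++ ESym.base r.2.2.2 :: ESym.star :: S := by
            rw [hw]; simp
          rw [hU] at hcore
          have heq : (((q₁ + qs) + 0) + 5 * ((e0 + es : ℕ) : ℤ) - (Mk.star : Mk α).off) + p0
              = ((q0 + 5 * (e0 : ℤ) - (Mk.ghost : Mk α).off) + p0) + 1 := by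
            rw [show (Mk.star : Mk α).off = 1 from rfl]
            rw [show (Mk.m3 r.1 r.2 : Mk α).off = 2 from rfl] at hq
            subst hq; push_cast [Mk.off]; ring
          rw [show (Mk.ghost : Mk α).mark = [] from rfl] at *
          rw [← heq]
          simpa using hcore
        · exfalso
          obtain ⟨μ', hμ'⟩ : ∃ μ', mk.mark = [μ'] := by
            cases mk
            · exact ⟨_, rfl⟩
            · exact ⟨_, rfl⟩
            · exact ⟨_, rfl⟩
            · exact absurd rfl hgh
          rw [hμ'] at hmu
          simp only [List.cons_append, List.cons.injEq] at hmu
          obtain ⟨hμb, -⟩ := hmu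
          cases mk <;> simp [Mk.mark] at hμ' <;> subst hμ' <;> simp at hμb
      · exfalso
        have hlen : mk.mark.length ≤ 1 := by cases mk <;> simp [Mk.mark]
        rw [hm] at hlen
        simp only [List.length_append, List.length_cons] at hlen
        omega
      · -- main case : m3 is the mark of this block
        have hm1 : m₁ = [] := by
          have hlen : mk.mark.length ≤ 1 := by cases mk <;> simp [Mk.mark]
          rw [hm] at hlen
          simp only [List.length_append, List.length_cons] at hlen
          exact List.eq_nil_of_length_eq_zero (by omega)
        subst hm1
        simp only [List.nil_append] at hm hP
        obtain ⟨ha, -⟩ : mk = Mk.m3 r.1 r.2 ∧ True := by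
          cases mk <;> simp [Mk.mark] at hm
          case m3 a' b' => obtain ⟨h1', h2'⟩ := hm; subst h1'; subst h2'; exact ⟨rfl, trivial⟩
        subst ha
        have hPt : PD (tau ++ [r.2.2.2]) (t0 ++ [ESym.base r.2.2.2]) (q0 + 0) :=
          pend_concat h1 (Pend.base r.2.2.2 Pend.nil)
        have hch : CostChain O (xi ++ r.1.2.2 :: (Mk.star : Mk α).need)
            ((tau ++ [r.2.2.2]) ++ (Mk.star : Mk α).give) e0 := by
          simpa [show (Mk.m3 r.1 r.2 : Mk α).need = [r.1.2.2] from rfl,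
            show (Mk.m3 r.1 r.2 : Mk α).give = [r.2.2.2] from rfl,
            show (Mk.star : Mk α).need = [] from rfl,
            show (Mk.star : Mk α).give = [] from rfl,
            List.append_assoc] using h2
        have hcore := core_R (Mk.star) h3 r.1.2.2 S hu0 xi (tau ++ [r.2.2.2])
          (t0 ++ [ESym.base r.2.2.2]) (q0 + 0) e0 hPt hch
        rw [hP]
        rw [show (Mk.star : Mk α).mark = [ESym.star] from rfl] at hcore
        have heq : (((q0 + 0) + 5 * (e0 : ℤ) - (Mk.star : Mk α).off) + p0)
            = ((q0 + 5 * (e0 : ℤ) - (Mk.m3 r.1 r.2 : Mk α).off) + p0) + 1 := by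
          show _ + 5 * (e0 : ℤ) - 1 + _ = (_ + 5 * (e0 : ℤ) - 2 + _) + 1
          ring
        rw [← heq]
        simpa using hcore
      · have hrec := ih3 w₁ S hu0
        refine blk' mk h1 h2 hrec rfl ?_ (by push_cast; ring)
        rw [hP]; simp

theorem pend_step (hγ3 : ∀ r ∈ D3, 1 ≤ γ3 r) {u u' : List (ESym α)} {c : ℕ}
    (hstep : RedStep I1 Dl Sb D3 γ3 u u' c) {x p} (h : PD x u p) :
    PD x u' (p + (c : ℤ)) := by
  obtain h1 | h2 | h3 | h4 | h5 | h6 | h7 | h8 := hstep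
  · obtain ⟨a, ha, ⟨P, S, hv, hw⟩, hc⟩ := h1
    subst hc
    have hins : O ([] : List α) [a] 1 := Or.inl ⟨a, ha, ⟨[], [], rfl, rfl⟩, rfl⟩
    have bld : ∀ ⦃y : List α⦄ ⦃v' : List (ESym α)⦄ ⦃q' : ℤ⦄, PD y v' q' →
        PD y ([ESym.base a] ++ v') ((5 : ℤ) + q') := by
      intro y v' q' hyv
      exact blk' (ξ := []) (τ := [a]) (e := 1) Mk.ghost (Pend.base a Pend.nil)
        (chain_single hins) hyv (by simp) (by simp [Mk.mark]) (by push_cast [Mk.off]; ring)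
    have := pend_ins bld h P S hv
    rw [hw]
    push_cast
    simpa using this
  · obtain ⟨a, ha, ⟨P, S, hv, hw⟩, hc⟩ := h2
    subst hc
    have hdel : O [a] ([] : List α) 1 :=
      Or.inr (Or.inl ⟨a, ha, ⟨[], [], by simp, by simp⟩, rfl⟩)
    have bld : ∀ ⦃y : List α⦄ ⦃v' : List (ESym α)⦄ ⦃q' : ℤ⦄, PD y v' q' →
        PD (a :: y) (([] : List (ESym α)) ++ v') ((5 : ℤ) + q') := by
      intro y v' q' hyv
      exact blk' (ξ := [a]) (τ := []) (e := 1) Mk.ghost Pend.nil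
        (chain_single hdel) hyv (by simp) (by simp [Mk.mark]) (by push_cast [Mk.off]; ring)
    have := pend_base1 bld h P S (by simpa using hv)
    rw [hw]
    push_cast
    simpa using this
  · obtain ⟨r, hr, ⟨P, S, hv, hw⟩, hc⟩ := h3
    subst hc
    have hsub : O [r.1] [r.2] 1 :=
      Or.inr (Or.inr (Or.inl ⟨r, hr, ⟨[], [], by simp, by simp⟩, rfl⟩))
    have bld : ∀ ⦃y : List α⦄ ⦃v' : List (ESym α)⦄ ⦃q' : ℤ⦄, PD y v' q' →
        PD (r.1 :: y) ([ESym.base r.2] ++ v') ((5 : ℤ) + q') := by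
      intro y v' q' hyv
      exact blk' (ξ := [r.1]) (τ := [r.2]) (e := 1) Mk.ghost (Pend.base r.2 Pend.nil)
        (chain_single hsub) hyv (by simp) (by simp [Mk.mark]) (by push_cast [Mk.off]; ring)
    have := pend_base1 bld h P S (by simpa using hv)
    rw [hw]
    push_cast
    simpa using this
  · obtain ⟨r, hr, ⟨P, S, hv, hw⟩, hc⟩ := h4
    subst hc
    have bld : ∀ ⦃y : List α⦄ ⦃v' : List (ESym α)⦄ ⦃q' : ℤ⦄, PD y v' q' →
        PD y ([ESym.m1 r.1 r.2] ++ v') ((5 * (γ3 r : ℤ) - 4) + q') := by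
      intro y v' q' hyv
      have := Pend.m1 (γ3 := γ3) r.1 r.2 hyv
      rw [Prod.mk.eta] at this
      simpa using this
    have := pend_ins bld h P S hv
    rw [hw]
    have hcast : ((5 * γ3 r - 4 : ℕ) : ℤ) = 5 * (γ3 r : ℤ) - 4 := by
      have := hγ3 r hr
      push_cast [Nat.cast_sub (by omega : 4 ≤ 5 * γ3 r)]
      ring
    rw [hcast]
    simpa using this
  · obtain ⟨r, hr, ⟨P, S, hv, hw⟩, hc⟩ := h5
    subst hc
    have := pendE hr h P S (by simpa using hv)
    rw [hw]
    push_cast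
    simpa using this
  · obtain ⟨r, hr, ⟨P, S, hv, hw⟩, hc⟩ := h6
    subst hc
    have := pendF (r := r) h P S (by simpa using hv)
    rw [hw]
    push_cast
    simpa using this
  · obtain ⟨r, hr, ⟨P, S, hv, hw⟩, hc⟩ := h7
    subst hc
    have := pendG (r := r) h P S (by simpa using hv)
    rw [hw]
    push_cast
    simpa using this
  · obtain ⟨⟨P, S, hv, hw⟩, hc⟩ := h8
    subst hc
    have := pend_star1 h P S (by simpa using hv)
    rw [hw]
    push_cast
    simpa using this

end pendbasics

end Red

/-- Counting obstruction for the 2-Edit reduction: any sequence of allowed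
finite-cost operations of the reduced instance transforming a fresh-symbol-free
string into a fresh-symbol-free string has total cost `5` times the total cost of
some sequence of original operations performing the corresponding transformation;
in particular its total cost is a sum of terms `5·γ(t)` over simulated original
operations `t`. -/

theorem reduction_counting_obstruction {α : Type*} (I1 Dl : Set α) (Sb : Set (α × α))
    (D3 : Set ((α × α × α) × (α × α × α))) (γ3 : ((α × α × α) × (α × α × α)) → ℕ)
    (hγ3 : ∀ r ∈ D3, 1 ≤ γ3 r) (v w : List α) (C : ℕ)
    (hchain : CostChain (RedStep I1 Dl Sb D3 γ3)
      (v.map ESym.base) (w.map ESym.base) C) :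
    ∃ c₀ : ℕ, CostChain (OrigStep I1 Dl Sb D3 γ3) v w c₀ ∧ C = 5 * c₀ := by
  have key : ∀ {u : List (ESym α)} {n : ℕ},
      CostChain (RedStep I1 Dl Sb D3 γ3) (v.map ESym.base) u n →
      Red.Pend I1 Dl Sb D3 γ3 v u (n : ℤ) := by
    intro u n hch
    induction hch with
    | refl => simpa using Red.pend_init v
    | tail h1 h2 ih =>
        have := Red.pend_step hγ3 h2 ih
        exact_mod_cast this
  obtain ⟨E, hcE, hpE⟩ := Red.pend_extract (key hchain) w rfl
  exact ⟨E, hcE, by exact_mod_cast hpE⟩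
end
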